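/- arXiv:2301.09094 — 5 statements merged into one kernel-verified Lean document; each statement's English description precedes it below -/
import Mathlib

section
/- Let f : ℝⁿ → ℝⁿ be of class C², let M := {x ∈ ℝⁿ | f(x) = 0} be nonempty, and suppose there is an open neighborhood G ⊆ ℝⁿ of M and an integer s with 0 < s < n such that dim(ker Df_x) = s for every x ∈ G. Then for every p ∈ M and every local coordinate system φ of M at p, the tangent space T_pM := Dφ_{φ(p)}⁻¹({y ∈ ℝⁿ | y_{s+1} = ⋯ = y_n = 0}) equals ker(Df_p). -/
/-!
On the slice `K = {y | y_i = 0 for i ≥ s}` through `φ p`, the chart inverse `ψ` lands in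
`M = f⁻¹(0)`, so `f ∘ ψ` vanishes near `φ p` on `K` and `Df_p ∘ Dψ_{φ p}` kills `K`:
`Dψ_{φ p}(K) ⊆ ker Df_p`. Since `Dφ_p` is a left inverse of `Dψ_{φ p}`, the image has
dimension `dim K = s = dim ker Df_p`, so the inclusion is an equality.
-/

open Set Filter Topology

noncomputable def coordSubspace (n s : ℕ) : Submodule ℝ (EuclideanSpace ℝ (Fin n)) :=
  Submodule.span ℝ (EuclideanSpace.basisFun (Fin n) ℝ '' {i | (i : ℕ) < s})

theorem coe_coordSubspace (n s : ℕ) :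
    (coordSubspace n s : Set (EuclideanSpace ℝ (Fin n))) =
      {y | ∀ i : Fin n, s ≤ (i : ℕ) → y i = 0} := by
  ext y
  simp only [SetLike.mem_coe, coordSubspace, ← OrthonormalBasis.coe_toBasis,
    Module.Basis.mem_span_image, subset_def, Finsupp.mem_support_iff,
    OrthonormalBasis.coe_toBasis_repr_apply, EuclideanSpace.basisFun_repr, mem_ofPred_eq,
    not_imp_comm, not_lt]

theorem finrank_coordSubspace {n s : ℕ} (hs : s ≤ n) :
    Module.finrank ℝ (coordSubspace n s) = s := by
  rw [coordSubspace, Set.image_eq_range, finrank_span_eq_card]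
  · simp [Fintype.card_subtype, Fin.card_filter_val_lt, hs]
  · exact (EuclideanSpace.basisFun (Fin n) ℝ).toBasis.linearIndependent.comp _
      Subtype.val_injective

section Calculus

variable {E F : Type*} [NormedAddCommGroup E] [NormedSpace ℝ E]
  [NormedAddCommGroup F] [NormedSpace ℝ F]

theorem Submodule.le_ker_fderiv_of_eventually_eq_zero {g : E → F} {K : Submodule ℝ E} {w : E}
    (hw : w ∈ K) (hg : DifferentiableAt ℝ g w) (h : ∀ᶠ x in 𝓝[(K : Set E)] w, g x = 0) :
    K ≤ LinearMap.ker (fderiv ℝ g w : E →ₗ[ℝ] F) := by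
  intro v hv
  have hline : Tendsto (fun t : ℝ => w + t • v) (𝓝 0) (𝓝[(K : Set E)] w) := by
    refine tendsto_nhdsWithin_iff.mpr
      ⟨?_, Eventually.of_forall fun t => K.add_mem hw (K.smul_mem t hv)⟩
    have : Continuous fun t : ℝ => w + t • v := by fun_prop
    simpa using this.tendsto 0
  have : lineDeriv ℝ g w v = 0 := by
    rw [lineDeriv, EventuallyEq.deriv_eq (f := fun _ => 0) (hline.eventually h), deriv_const]
  rw [LinearMap.mem_ker, ContinuousLinearMap.coe_coe, ← hg.lineDeriv_eq_fderiv, this]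

theorem injective_fderiv_of_leftInverse {φ : F → E} {ψ : E → F} {w : E}
    (hφ : DifferentiableAt ℝ φ (ψ w)) (hψ : DifferentiableAt ℝ ψ w)
    (h : φ ∘ ψ =ᶠ[𝓝 w] id) : Function.Injective (fderiv ℝ ψ w) := by
  have hcomp : (fderiv ℝ φ (ψ w)).comp (fderiv ℝ ψ w) = ContinuousLinearMap.id ℝ E := by
    rw [← fderiv_comp w hφ hψ, h.fderiv_eq, fderiv_id]
  exact Function.LeftInverse.injective fun v => congr($hcomp v)

end Calculus

theorem statement1_general
    (n s : ℕ)
    (f : EuclideanSpace ℝ (Fin n) → EuclideanSpace ℝ (Fin n))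
    (hf : ContDiff ℝ 2 f)
    (M : Set (EuclideanSpace ℝ (Fin n))) (hMdef : M = {x | f x = 0})
    (G : Set (EuclideanSpace ℝ (Fin n))) (hMG : M ⊆ G)
    (hker : ∀ x ∈ G, Module.finrank ℝ (LinearMap.ker (fderiv ℝ f x : EuclideanSpace ℝ (Fin n) →ₗ[ℝ] EuclideanSpace ℝ (Fin n))) = s) :
    ∀ p ∈ M, ∀ U : Set (EuclideanSpace ℝ (Fin n)),
      ∀ φ ψ : EuclideanSpace ℝ (Fin n) → EuclideanSpace ℝ (Fin n),
        IsOpen U → p ∈ U →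
        ContDiffOn ℝ 2 φ U → IsOpen (φ '' U) → ContDiffOn ℝ 2 ψ (φ '' U) →
        (∀ z ∈ U, ψ (φ z) = z) → (∀ w ∈ φ '' U, φ (ψ w) = w) →
        M ∩ U = {x ∈ U | ∀ i : Fin n, s ≤ (i : ℕ) → φ x i = 0} →
        fderiv ℝ ψ (φ p) '' {y : EuclideanSpace ℝ (Fin n) | ∀ i : Fin n, s ≤ (i : ℕ) → y i = 0}
          = (LinearMap.ker (fderiv ℝ f p : EuclideanSpace ℝ (Fin n) →ₗ[ℝ] EuclideanSpace ℝ (Fin n)) : Set (EuclideanSpace ℝ (Fin n))) := by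
  intro p hpM U φ ψ hU hpU hφ hφU hψ hψφ hφψ hflat
  set K := coordSubspace n s
  have hpG : p ∈ G := hMG hpM
  have hsn : s ≤ n := hker p hpG ▸ (Submodule.finrank_le _).trans_eq finrank_euclideanSpace_fin
  have hφU_nhds : φ '' U ∈ 𝓝 (φ p) := hφU.mem_nhds (mem_image_of_mem φ hpU)
  have hφp : DifferentiableAt ℝ φ p :=
    (hφ.contDiffAt (hU.mem_nhds hpU)).differentiableAt two_ne_zero
  have hψp : DifferentiableAt ℝ ψ (φ p) := (hψ.contDiffAt hφU_nhds).differentiableAt two_ne_zero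
  have hfp : DifferentiableAt ℝ f (ψ (φ p)) := hf.differentiable two_ne_zero _
  have hflatK : ∀ x ∈ U, x ∈ M ↔ φ x ∈ K := fun x hx => by
    have hx' := Set.ext_iff.1 hflat x
    simp only [mem_inter_iff, mem_ofPred_eq, hx, and_true, true_and] at hx'
    rw [hx', ← SetLike.mem_coe, coe_coordSubspace]
    rfl
  have hvanish : ∀ᶠ y in 𝓝[(K : Set _)] (φ p), (f ∘ ψ) y = 0 := by
    filter_upwards [inter_mem_nhdsWithin _ hφU_nhds] with y ⟨hyK, x, hx, hxy⟩
    subst hxy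
    have : x ∈ M := (hflatK x hx).2 hyK
    rw [hMdef] at this
    simpa [hψφ x hx] using this
  have hmap : K.map (fderiv ℝ ψ (φ p)).toLinearMap ≤
      LinearMap.ker (fderiv ℝ f p).toLinearMap := by
    have := Submodule.le_ker_fderiv_of_eventually_eq_zero ((hflatK p hpU).1 hpM)
      (hfp.comp _ hψp) hvanish
    rw [fderiv_comp _ hfp hψp, hψφ p hpU] at this
    exact Submodule.map_le_iff_le_comap.2 this
  have hinj := injective_fderiv_of_leftInverse (by rwa [hψφ p hpU]) hψp
    (eventually_of_mem hφU_nhds hφψ)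
  have heq := Submodule.eq_of_le_of_finrank_eq hmap (by
    rw [← (Submodule.equivMapOfInjective _ hinj K).finrank_eq, finrank_coordSubspace hsn,
      hker p hpG])
  rw [← coe_coordSubspace, ← heq, Submodule.map_coe]
  rfl

/-- Under the constant-rank assumptions, for every `p ∈ M` and every
local coordinate system `φ` (a `C²` diffeomorphism onto its image, with inverse `ψ`,
flattening `M` to the first `s` coordinates), the tangent space
`T_pM = Dψ_{φ(p)}({y | y_{s+1} = ⋯ = y_n = 0})` equals `ker (Df_p)`. -/
theorem statement1
    (n s : ℕ) (hs0 : 0 < s) (hsn : s < n)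
    (f : EuclideanSpace ℝ (Fin n) → EuclideanSpace ℝ (Fin n))
    (hf : ContDiff ℝ 2 f)
    (M : Set (EuclideanSpace ℝ (Fin n))) (hMdef : M = {x | f x = 0})
    (hMne : M.Nonempty)
    (G : Set (EuclideanSpace ℝ (Fin n))) (hG : IsOpen G) (hMG : M ⊆ G)
    (hker : ∀ x ∈ G, Module.finrank ℝ (LinearMap.ker (fderiv ℝ f x : EuclideanSpace ℝ (Fin n) →ₗ[ℝ] EuclideanSpace ℝ (Fin n))) = s) :
    ∀ p ∈ M, ∀ U : Set (EuclideanSpace ℝ (Fin n)),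
      ∀ φ ψ : EuclideanSpace ℝ (Fin n) → EuclideanSpace ℝ (Fin n),
        IsOpen U → p ∈ U →
        ContDiffOn ℝ 2 φ U → IsOpen (φ '' U) → ContDiffOn ℝ 2 ψ (φ '' U) →
        (∀ z ∈ U, ψ (φ z) = z) → (∀ w ∈ φ '' U, φ (ψ w) = w) →
        M ∩ U = {x ∈ U | ∀ i : Fin n, s ≤ (i : ℕ) → φ x i = 0} →
        fderiv ℝ ψ (φ p) '' {y : EuclideanSpace ℝ (Fin n) | ∀ i : Fin n, s ≤ (i : ℕ) → y i = 0}
          = (LinearMap.ker (fderiv ℝ f p : EuclideanSpace ℝ (Fin n) →ₗ[ℝ] EuclideanSpace ℝ (Fin n)) : Set (EuclideanSpace ℝ (Fin n))) :=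
  statement1_general n s f hf M hMdef G hMG hker
end

section
/- Let f : ℝⁿ → ℝⁿ be of class C², let M := {x ∈ ℝⁿ | f(x) = 0} be nonempty, and suppose there is an open neighborhood G ⊆ ℝⁿ of M and an integer s with 0 < s < n such that dim(ker Df_x) = s for every x ∈ G. Then M is a C^{2,1} manifold: for every p ∈ M there exist a set V ⊆ M that is open relative to M with p ∈ V and a constant L > 0 such that for all q ∈ V the Hausdorff distance between tangent spaces satisfies d_H(T_pM, T_qM) ≤ L‖p − q‖. -/
/-!
Since `f` is `C²`, `x ↦ Df_x` is locally Lipschitz, so `‖Df_p - Df_q‖ = O(‖p - q‖)`.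
The map `Df_p` is bounded below, by some `c > 0`, on `(ker Df_p)ᗮ`; hence every `u ∈ ker Df_q`
lies within `‖Df_p - Df_q‖ ‖u‖ / c` of its orthogonal projection onto `ker Df_p`. Once
`‖Df_p - Df_q‖ < c` this projection `ker Df_q → ker Df_p` is injective, hence bijective by the
constant-rank hypothesis, and normalising the preimage of a unit vector `t ∈ ker Df_p` gives a
unit vector of `ker Df_q` within `4 ‖Df_p - Df_q‖ / c` of `t`.
-/

open Set Topology

section NormedSpace

variable {E : Type*} [NormedAddCommGroup E] [NormedSpace ℝ E]

/-- The paper's one-sided distance `d_H(T₁, T₂)` between the unit spheres of two subspaces. -/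
noncomputable def unitHausdorffDist (T₁ T₂ : Submodule ℝ E) : ℝ :=
  sSup {d : ℝ | ∃ t₁ ∈ T₁, ‖t₁‖ = 1 ∧
    d = sInf {r : ℝ | ∃ t₂ ∈ T₂, ‖t₂‖ = 1 ∧ r = ‖t₂ - t₁‖}}

theorem unitHausdorffDist_le {T₁ T₂ : Submodule ℝ E} {D : ℝ} (hD : 0 ≤ D)
    (h : ∀ t₁ ∈ T₁, ‖t₁‖ = 1 → ∃ t₂ ∈ T₂, ‖t₂‖ = 1 ∧ ‖t₂ - t₁‖ ≤ D) :
    unitHausdorffDist T₁ T₂ ≤ D := by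
  refine Real.sSup_le ?_ hD
  rintro _ ⟨t₁, ht₁, ht₁_norm, rfl⟩
  obtain ⟨t₂, ht₂, ht₂_norm, hle⟩ := h t₁ ht₁ ht₁_norm
  have h_bdd : BddBelow {r : ℝ | ∃ t₂ ∈ T₂, ‖t₂‖ = 1 ∧ r = ‖t₂ - t₁‖} := by
    refine ⟨0, ?_⟩
    rintro _ ⟨t, -, -, rfl⟩
    exact norm_nonneg _
  exact (csInf_le h_bdd ⟨t₂, ht₂, ht₂_norm, rfl⟩).trans hle

theorem norm_inv_norm_smul_sub_self_le (w : E) : ‖‖w‖⁻¹ • w - w‖ ≤ |1 - ‖w‖| := by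
  rcases eq_or_ne w 0 with rfl | hw
  · simp
  have hw' : ‖w‖ ≠ 0 := norm_ne_zero_iff.mpr hw
  have h_smul : ‖w‖⁻¹ • w - w = (‖w‖⁻¹ - 1) • w := by rw [sub_smul, one_smul]
  rw [h_smul, norm_smul, Real.norm_eq_abs, ← abs_norm w, ← abs_mul, abs_norm, sub_mul,
    inv_mul_cancel₀ hw', one_mul]

theorem norm_inv_norm_smul_sub_le_of_norm_sub_le {w t : E} {ε : ℝ} (ht : ‖t‖ = 1)
    (hε : ε ≤ 1 / 2) (h : ‖w - t‖ ≤ ε * ‖w‖) : ‖‖w‖⁻¹ • w - t‖ ≤ 4 * ε := by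
  have h_norm_sub : |1 - ‖w‖| ≤ ‖w - t‖ := by
    rw [← ht, norm_sub_rev w]
    exact abs_norm_sub_norm_le t w
  have h_norm_le : ‖w‖ ≤ 2 := by
    have := norm_le_norm_add_norm_sub' w t
    nlinarith [norm_nonneg w]
  have hε₀ : 0 ≤ ε := by
    by_contra! hneg
    have h_one_le : 1 ≤ ‖w‖ := by
      nlinarith [le_abs_self (1 - ‖w‖), mul_nonneg (neg_nonneg.mpr hneg.le) (norm_nonneg w)]
    nlinarith [norm_nonneg (w - t), mul_nonneg (neg_nonneg.mpr hneg.le) (sub_nonneg.mpr h_one_le)]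
  calc ‖‖w‖⁻¹ • w - t‖ ≤ ‖‖w‖⁻¹ • w - w‖ + ‖w - t‖ := norm_sub_le_norm_sub_add_norm_sub _ _ _
    _ ≤ 2 * (ε * ‖w‖) := by linarith [norm_inv_norm_smul_sub_self_le w]
    _ ≤ 4 * ε := by nlinarith

end NormedSpace

section InnerProductSpace

variable {E F : Type*} [NormedAddCommGroup E] [InnerProductSpace ℝ E] [FiniteDimensional ℝ E]
  [NormedAddCommGroup F] [NormedSpace ℝ F]

theorem LinearMap.exists_pos_mul_norm_le_norm_of_mem_orthogonal_ker (A : E →ₗ[ℝ] F) :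
    ∃ c > 0, ∀ v ∈ (LinearMap.ker A)ᗮ, c * ‖v‖ ≤ ‖A v‖ := by
  have h_inj : LinearMap.ker (A ∘ₗ (LinearMap.ker A)ᗮ.subtype) = ⊥ := by
    rw [LinearMap.ker_eq_bot']
    intro x hx
    exact Subtype.ext
      (Submodule.disjoint_def.mp (Submodule.orthogonal_disjoint (LinearMap.ker A)) x hx x.2)
  obtain ⟨K, hK, hA⟩ := (A ∘ₗ (LinearMap.ker A)ᗮ.subtype).exists_antilipschitzWith h_inj
  refine ⟨(K : ℝ)⁻¹, inv_pos.mpr hK, fun v hv => ?_⟩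
  have := hA.le_mul_dist ⟨v, hv⟩ 0
  rw [map_zero, dist_zero_right, dist_zero_right] at this
  rw [inv_mul_le_iff₀ (by exact_mod_cast hK)]
  exact this

variable {A B : E →L[ℝ] F} {c : ℝ}

theorem mul_norm_sub_starProjection_ker_le
    (hA : ∀ v ∈ (LinearMap.ker (A : E →ₗ[ℝ] F))ᗮ, c * ‖v‖ ≤ ‖A v‖)
    {u : E} (hu : u ∈ LinearMap.ker (B : E →ₗ[ℝ] F)) :
    c * ‖u - (LinearMap.ker (A : E →ₗ[ℝ] F)).starProjection u‖ ≤ ‖A - B‖ * ‖u‖ := by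
  set K := LinearMap.ker (A : E →ₗ[ℝ] F)
  have h_proj : A (K.starProjection u) = 0 := K.starProjection_apply_mem u
  have hBu : B u = 0 := hu
  calc c * ‖u - K.starProjection u‖ ≤ ‖A (u - K.starProjection u)‖ :=
        hA _ (K.sub_starProjection_mem_orthogonal u)
    _ = ‖(A - B) u‖ := by simp [h_proj, hBu]
    _ ≤ ‖A - B‖ * ‖u‖ := (A - B).le_opNorm u

theorem exists_mem_ker_starProjection_eq
    (hrk : Module.finrank ℝ (LinearMap.ker (B : E →ₗ[ℝ] F)) =
      Module.finrank ℝ (LinearMap.ker (A : E →ₗ[ℝ] F)))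
    (hA : ∀ v ∈ (LinearMap.ker (A : E →ₗ[ℝ] F))ᗮ, c * ‖v‖ ≤ ‖A v‖) (hδ : ‖A - B‖ < c)
    {t : E} (ht : t ∈ LinearMap.ker (A : E →ₗ[ℝ] F)) :
    ∃ u ∈ LinearMap.ker (B : E →ₗ[ℝ] F), (LinearMap.ker (A : E →ₗ[ℝ] F)).starProjection u = t := by
  set K := LinearMap.ker (A : E →ₗ[ℝ] F)
  let φ := K.orthogonalProjectionOnto.toLinearMap ∘ₗ (LinearMap.ker (B : E →ₗ[ℝ] F)).subtype
  have hφ : Function.Injective φ := by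
    rw [← LinearMap.ker_eq_bot, LinearMap.ker_eq_bot']
    intro u hu
    have h_proj : K.starProjection u = 0 := congrArg Subtype.val hu
    have h := mul_norm_sub_starProjection_ker_le hA u.2
    rw [h_proj, sub_zero] at h
    have : ‖(u : E)‖ = 0 := by nlinarith [norm_nonneg (u : E)]
    exact Subtype.ext (norm_eq_zero.mp this)
  obtain ⟨u, hu⟩ := (LinearMap.injective_iff_surjective_of_finrank_eq_finrank hrk).mp hφ ⟨t, ht⟩
  exact ⟨u, u.2, congrArg Subtype.val hu⟩

theorem unitHausdorffDist_ker_le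
    (hrk : Module.finrank ℝ (LinearMap.ker (B : E →ₗ[ℝ] F)) =
      Module.finrank ℝ (LinearMap.ker (A : E →ₗ[ℝ] F)))
    (hc : 0 < c) (hA : ∀ v ∈ (LinearMap.ker (A : E →ₗ[ℝ] F))ᗮ, c * ‖v‖ ≤ ‖A v‖)
    (hδ : ‖A - B‖ ≤ c / 2) :
    unitHausdorffDist (LinearMap.ker (A : E →ₗ[ℝ] F)) (LinearMap.ker (B : E →ₗ[ℝ] F)) ≤
      4 / c * ‖A - B‖ := by
  refine unitHausdorffDist_le (by positivity) fun t ht ht_norm => ?_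
  obtain ⟨u, hu, rfl⟩ := exists_mem_ker_starProjection_eq hrk hA (by linarith) ht
  have h_close : ‖u - (LinearMap.ker (A : E →ₗ[ℝ] F)).starProjection u‖ ≤ ‖A - B‖ / c * ‖u‖ := by
    rw [div_mul_eq_mul_div, le_div_iff₀ hc, mul_comm]
    exact mul_norm_sub_starProjection_ker_le hA hu
  refine ⟨‖u‖⁻¹ • u, Submodule.smul_mem _ _ hu, ?_, ?_⟩
  · refine norm_smul_inv_norm fun hu0 => ?_
    simp [hu0] at ht_norm
  · have := norm_inv_norm_smul_sub_le_of_norm_sub_le ht_norm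
      (by rw [div_le_iff₀ hc]; linarith) h_close
    exact this.trans_eq (by ring)

end InnerProductSpace

theorem ContDiffAt.exists_eventually_norm_fderiv_sub_le {E F : Type*} [NormedAddCommGroup E]
    [NormedSpace ℝ E] [NormedAddCommGroup F] [NormedSpace ℝ F] {f : E → F} {p : E}
    (hf : ContDiffAt ℝ 2 f p) :
    ∃ ℓ : ℝ, ∀ᶠ q in 𝓝 p, ‖fderiv ℝ f p - fderiv ℝ f q‖ ≤ ℓ * ‖p - q‖ := by
  obtain ⟨ℓ, t, ht, hlip⟩ := (hf.fderiv_right (m := 1) (by norm_num)).exists_lipschitzOnWith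
  refine ⟨ℓ, ?_⟩
  filter_upwards [ht] with q hq
  simpa only [dist_eq_norm] using hlip.dist_le_mul p (mem_of_mem_nhds ht) q hq

theorem ContDiffAt.exists_eventually_unitHausdorffDist_ker_fderiv_le {E F : Type*}
    [NormedAddCommGroup E] [InnerProductSpace ℝ E] [FiniteDimensional ℝ E]
    [NormedAddCommGroup F] [NormedSpace ℝ F] {f : E → F} {p : E} (hf : ContDiffAt ℝ 2 f p)
    (hrk : ∀ᶠ q in 𝓝 p, Module.finrank ℝ (LinearMap.ker (fderiv ℝ f q : E →ₗ[ℝ] F)) =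
      Module.finrank ℝ (LinearMap.ker (fderiv ℝ f p : E →ₗ[ℝ] F))) :
    ∃ L > 0, ∀ᶠ q in 𝓝 p,
      unitHausdorffDist (LinearMap.ker (fderiv ℝ f p : E →ₗ[ℝ] F))
        (LinearMap.ker (fderiv ℝ f q : E →ₗ[ℝ] F)) ≤ L * ‖p - q‖ := by
  obtain ⟨c, hc, hA⟩ := LinearMap.exists_pos_mul_norm_le_norm_of_mem_orthogonal_ker
    (fderiv ℝ f p : E →ₗ[ℝ] F)
  obtain ⟨ℓ, hlip⟩ := hf.exists_eventually_norm_fderiv_sub_le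
  have h_cont : ∀ᶠ q in 𝓝 p, ‖fderiv ℝ f p - fderiv ℝ f q‖ ≤ c / 2 := by
    have := (hf.fderiv_right (m := 1) (by norm_num)).continuousAt.eventually
      (Metric.closedBall_mem_nhds (fderiv ℝ f p) (by positivity : 0 < c / 2))
    filter_upwards [this] with q hq
    rwa [dist_eq_norm, norm_sub_rev] at hq
  refine ⟨4 / c * max ℓ 1, by positivity, ?_⟩
  filter_upwards [hrk, hlip, h_cont] with q hrk_q hlip_q h_cont_q
  calc _ ≤ 4 / c * ‖fderiv ℝ f p - fderiv ℝ f q‖ := unitHausdorffDist_ker_le hrk_q hc hA h_cont_q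
    _ ≤ 4 / c * (max ℓ 1 * ‖p - q‖) := by
      gcongr
      exact hlip_q.trans (by gcongr; exact le_max_left _ _)
    _ = 4 / c * max ℓ 1 * ‖p - q‖ := by ring

theorem statement2_general
    (n s : ℕ)
    (f : EuclideanSpace ℝ (Fin n) → EuclideanSpace ℝ (Fin n))
    (hf : ContDiff ℝ 2 f)
    (M : Set (EuclideanSpace ℝ (Fin n)))
    (G : Set (EuclideanSpace ℝ (Fin n))) (hG : IsOpen G) (hMG : M ⊆ G)
    (hker : ∀ x ∈ G, Module.finrank ℝ (LinearMap.ker (fderiv ℝ f x : EuclideanSpace ℝ (Fin n) →ₗ[ℝ] EuclideanSpace ℝ (Fin n))) = s) :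
    ∀ p ∈ M, ∃ V : Set (EuclideanSpace ℝ (Fin n)), V ⊆ M ∧ p ∈ V ∧
      (∃ O : Set (EuclideanSpace ℝ (Fin n)), IsOpen O ∧ V = M ∩ O) ∧
      ∃ L : ℝ, 0 < L ∧ ∀ q ∈ V,
        sSup {d : ℝ | ∃ t₁ ∈ LinearMap.ker (fderiv ℝ f p : EuclideanSpace ℝ (Fin n) →ₗ[ℝ] EuclideanSpace ℝ (Fin n)), ‖t₁‖ = 1 ∧
            d = sInf {r : ℝ | ∃ t₂ ∈ LinearMap.ker (fderiv ℝ f q : EuclideanSpace ℝ (Fin n) →ₗ[ℝ] EuclideanSpace ℝ (Fin n)), ‖t₂‖ = 1 ∧ r = ‖t₂ - t₁‖}}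
          ≤ L * ‖p - q‖ := by
  intro p hp
  have hrk : ∀ᶠ q in 𝓝 p, Module.finrank ℝ (LinearMap.ker (fderiv ℝ f q : EuclideanSpace ℝ (Fin n) →ₗ[ℝ] EuclideanSpace ℝ (Fin n))) =
      Module.finrank ℝ (LinearMap.ker (fderiv ℝ f p : EuclideanSpace ℝ (Fin n) →ₗ[ℝ] EuclideanSpace ℝ (Fin n))) := by
    filter_upwards [hG.mem_nhds (hMG hp)] with q hq
    rw [hker q hq, hker p (hMG hp)]
  obtain ⟨L, hL, hdist⟩ := hf.contDiffAt.exists_eventually_unitHausdorffDist_ker_fderiv_le hrk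
  obtain ⟨O, hO_dist, hO, hpO⟩ := eventually_nhds_iff.mp hdist
  exact ⟨M ∩ O, inter_subset_left, ⟨hp, hpO⟩, ⟨O, hO, rfl⟩, L, hL, fun q hq => hO_dist q hq.2⟩

/-- Under the constant-rank assumptions, `M` is a `C^{2,1}` manifold:
around every `p ∈ M` there is a relatively open set `V ⊆ M` containing `p` and a
constant `L > 0` such that for all `q ∈ V` the Hausdorff distance between the unit
spheres of the tangent spaces `T_pM = ker Df_p` and `T_qM = ker Df_q` is at most
`L‖p − q‖`.  The Hausdorff distance is expressed through `sSup`/`sInf`. -/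
theorem statement2
    (n s : ℕ) (hs0 : 0 < s) (hsn : s < n)
    (f : EuclideanSpace ℝ (Fin n) → EuclideanSpace ℝ (Fin n))
    (hf : ContDiff ℝ 2 f)
    (M : Set (EuclideanSpace ℝ (Fin n))) (hMdef : M = {x | f x = 0})
    (hMne : M.Nonempty)
    (G : Set (EuclideanSpace ℝ (Fin n))) (hG : IsOpen G) (hMG : M ⊆ G)
    (hker : ∀ x ∈ G, Module.finrank ℝ (LinearMap.ker (fderiv ℝ f x : EuclideanSpace ℝ (Fin n) →ₗ[ℝ] EuclideanSpace ℝ (Fin n))) = s) :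
    ∀ p ∈ M, ∃ V : Set (EuclideanSpace ℝ (Fin n)), V ⊆ M ∧ p ∈ V ∧
      (∃ O : Set (EuclideanSpace ℝ (Fin n)), IsOpen O ∧ V = M ∩ O) ∧
      ∃ L : ℝ, 0 < L ∧ ∀ q ∈ V,
        sSup {d : ℝ | ∃ t₁ ∈ LinearMap.ker (fderiv ℝ f p : EuclideanSpace ℝ (Fin n) →ₗ[ℝ] EuclideanSpace ℝ (Fin n)), ‖t₁‖ = 1 ∧
            d = sInf {r : ℝ | ∃ t₂ ∈ LinearMap.ker (fderiv ℝ f q : EuclideanSpace ℝ (Fin n) →ₗ[ℝ] EuclideanSpace ℝ (Fin n)), ‖t₂‖ = 1 ∧ r = ‖t₂ - t₁‖}}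
          ≤ L * ‖p - q‖ :=
  statement2_general n s f hf M G hG hMG hker
end

section
/- Let f : ℝⁿ → ℝⁿ be of class C², let M := {x ∈ ℝⁿ | f(x) = 0} be nonempty, suppose there is an open neighborhood G ⊆ ℝⁿ of M and an integer s with 0 < s < n such that dim(ker Df_x) = s for every x ∈ G, and suppose that for each x ∈ G the smallest nonzero singular value of Df_x is bounded from below by a constant c̃ > 0 (independent of x). Then M is a C² manifold, and there exist an open set V ⊆ ℝⁿ and a constant c > 0 with M ⊆ V ⊆ E(M) such that c · dist(x, M) ≤ ‖f(x)‖ for all x ∈ V. -/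
open Set Metric

/-- The smallest nonzero singular value of `A`, i.e. the infimum of `‖A v‖` over unit
vectors `v` orthogonal to the kernel of `A`. -/
noncomputable def smallestPosSV {n : ℕ}
    (A : EuclideanSpace ℝ (Fin n) →L[ℝ] EuclideanSpace ℝ (Fin n)) : ℝ :=
  sInf {r : ℝ | ∃ v ∈ (LinearMap.ker (A : EuclideanSpace ℝ (Fin n) →ₗ[ℝ] EuclideanSpace ℝ (Fin n)))ᗮ, ‖v‖ = 1 ∧ r = ‖A v‖}

open Filter Topology
open scoped RealInnerProductSpace


section Aux
variable {n s : ℕ}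
local notation "E" => EuclideanSpace ℝ (Fin n)

noncomputable def B1raw (n s : ℕ) (bb : Fin s → EuclideanSpace ℝ (Fin n)) :
    EuclideanSpace ℝ (Fin n) →ₗ[ℝ] EuclideanSpace ℝ (Fin n) where
  toFun v := WithLp.toLp 2 (fun i : Fin n => if h : (i : ℕ) < s then ⟪bb ⟨i, h⟩, v⟫ else 0)
  map_add' v w := by ext i; by_cases h : (i : ℕ) < s <;> simp [h, inner_add_right]
  map_smul' a v := by ext i; by_cases h : (i : ℕ) < s <;> simp [h, inner_smul_right]

noncomputable def B2raw (n s : ℕ) (cc : Fin (n - s) → EuclideanSpace ℝ (Fin n)) :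
    EuclideanSpace ℝ (Fin n) →ₗ[ℝ] EuclideanSpace ℝ (Fin n) where
  toFun v := WithLp.toLp 2 (fun i : Fin n => if h : (i : ℕ) - s < n - s ∧ s ≤ (i : ℕ) then ⟪cc ⟨(i : ℕ) - s, h.1⟩, v⟫ else 0)
  map_add' v w := by
    ext i; by_cases h : (i : ℕ) - s < n - s ∧ s ≤ (i : ℕ) <;> simp [h, inner_add_right]
  map_smul' a v := by
    ext i; by_cases h : (i : ℕ) - s < n - s ∧ s ≤ (i : ℕ) <;> simp [h, inner_smul_right]

noncomputable def B1c (n s : ℕ) (bb : Fin s → EuclideanSpace ℝ (Fin n)) :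
    EuclideanSpace ℝ (Fin n) →L[ℝ] EuclideanSpace ℝ (Fin n) :=
  LinearMap.toContinuousLinearMap (B1raw n s bb)

noncomputable def B2c (n s : ℕ) (cc : Fin (n - s) → EuclideanSpace ℝ (Fin n)) :
    EuclideanSpace ℝ (Fin n) →L[ℝ] EuclideanSpace ℝ (Fin n) :=
  LinearMap.toContinuousLinearMap (B2raw n s cc)

lemma B1c_apply (bb : Fin s → E) (v : E) (i : Fin n) :
    B1c n s bb v i = if h : (i : ℕ) < s then ⟪bb ⟨i, h⟩, v⟫ else 0 := rfl

lemma B2c_apply (cc : Fin (n - s) → E) (v : E) (i : Fin n) :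
    B2c n s cc v i
      = if h : (i : ℕ) - s < n - s ∧ s ≤ (i : ℕ) then ⟪cc ⟨(i : ℕ) - s, h.1⟩, v⟫ else 0 := rfl

noncomputable def projLraw (n s : ℕ) : EuclideanSpace ℝ (Fin n) →ₗ[ℝ] EuclideanSpace ℝ (Fin n) where
  toFun v := WithLp.toLp 2 (fun i : Fin n => if s ≤ (i : ℕ) then v i else 0)
  map_add' v w := by ext i; by_cases h : s ≤ (i : ℕ) <;> simp [h]
  map_smul' a v := by ext i; by_cases h : s ≤ (i : ℕ) <;> simp [h]

noncomputable def projL (n s : ℕ) : EuclideanSpace ℝ (Fin n) →L[ℝ] EuclideanSpace ℝ (Fin n) :=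
  LinearMap.toContinuousLinearMap (projLraw n s)

lemma projL_apply (v : E) (i : Fin n) : projL n s v i = if s ≤ (i : ℕ) then v i else 0 := rfl

noncomputable def kap (n s : ℕ) (hsn : s ≤ n) :
    EuclideanSpace ℝ (Fin (n - s)) →ₗ[ℝ] EuclideanSpace ℝ (Fin n) where
  toFun z := WithLp.toLp 2 (fun i : Fin n => if h : s ≤ (i : ℕ) then z ⟨(i : ℕ) - s, by omega⟩ else 0)
  map_add' v w := by ext i; by_cases h : s ≤ (i : ℕ) <;> simp [h]
  map_smul' a v := by ext i; by_cases h : s ≤ (i : ℕ) <;> simp [h]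

lemma kap_spec (hsn : s ≤ n) (z : EuclideanSpace ℝ (Fin (n - s))) (j : Fin (n - s)) :
    kap n s hsn z ⟨s + (j : ℕ), by have := j.isLt; omega⟩ = z j := by
  show dite _ _ _ = _
  rw [dif_pos (by simp)]
  exact congrArg (fun k => z k) (Fin.ext (by simp))

lemma kap_injective (hsn : s ≤ n) : Function.Injective (kap n s hsn) := by
  intro z w h
  ext j
  rw [← kap_spec hsn z j, ← kap_spec hsn w j, h]

lemma range_kap (hsn : s ≤ n) :
    LinearMap.range (kap n s hsn) = LinearMap.range ((projL n s : E →L[ℝ] E) : E →ₗ[ℝ] E) := by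
  ext y
  simp only [LinearMap.mem_range]
  constructor
  · rintro ⟨z, rfl⟩
    refine ⟨kap n s hsn z, ?_⟩
    ext i
    show (if s ≤ (i : ℕ) then kap n s hsn z i else 0) = _
    by_cases h : s ≤ (i : ℕ) <;> simp [kap, h]
  · rintro ⟨v, rfl⟩
    refine ⟨WithLp.toLp 2 (fun j : Fin (n - s) => v ⟨s + (j : ℕ), by have := j.isLt; omega⟩), ?_⟩
    ext i
    show _ = (if s ≤ (i : ℕ) then v i else 0)
    by_cases h : s ≤ (i : ℕ)
    · show dite _ _ _ = _
      rw [dif_pos h, if_pos h]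
      show v _ = v i
      exact congrArg (fun k => v k) (Fin.ext (by simp; omega))
    · simp [kap, h]

lemma finrank_range_projL (hsn : s ≤ n) :
    Module.finrank ℝ (LinearMap.range ((projL n s : E →L[ℝ] E) : E →ₗ[ℝ] E)) = n - s := by
  rw [← range_kap hsn, LinearMap.finrank_range_of_inj (kap_injective hsn),
    finrank_euclideanSpace_fin]

lemma eq_zero_of_map_finrank_eq {V W : Type*} [AddCommGroup V] [Module ℝ V]
    [AddCommGroup W] [Module ℝ W] [FiniteDimensional ℝ V]
    (S : Submodule ℝ V) (ℓ : V →ₗ[ℝ] W)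
    (h : Module.finrank ℝ (Submodule.map ℓ S) = Module.finrank ℝ S)
    {v : V} (hv : v ∈ S) (hℓ : ℓ v = 0) : v = 0 := by
  set q : S →ₗ[ℝ] W := ℓ.comp S.subtype with hq
  have hrange : LinearMap.range q = Submodule.map ℓ S := by
    rw [hq, LinearMap.range_comp, Submodule.range_subtype]
  have hrk := LinearMap.finrank_range_add_finrank_ker q
  rw [hrange, h] at hrk
  have hker : Module.finrank ℝ (LinearMap.ker q) = 0 := by omega
  have hbot : LinearMap.ker q = ⊥ := Submodule.finrank_eq_zero.mp hker
  have hmem : (⟨v, hv⟩ : S) ∈ LinearMap.ker q := by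
    simp [hq, LinearMap.mem_ker, hℓ]
  rw [hbot, Submodule.mem_bot] at hmem
  exact congrArg Subtype.val hmem

lemma Aprime_inj (hsn : s < n) (A : E →L[ℝ] E)
    (b : OrthonormalBasis (Fin s) ℝ (LinearMap.ker (A : E →ₗ[ℝ] E)))
    (c : OrthonormalBasis (Fin (n - s)) ℝ (LinearMap.range (A : E →ₗ[ℝ] E)))
    (u : E)
    (hu : (B1c n s (fun i => (b i : E)) + (B2c n s (fun j => (c j : E))).comp A) u = 0) :
    u = 0 := by
  have hcoord : ∀ i : Fin n, B1c n s (fun i => (b i : E)) u i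
      + B2c n s (fun j => (c j : E)) (A u) i = 0 := by
    intro i
    have := congrArg (fun w : E => w i) hu
    simpa using this
  have hAu : A u = 0 := by
    have hin : ∀ j : Fin (n - s), ⟪(c j : E), A u⟫ = 0 := by
      intro j
      have h1 := hcoord ⟨s + (j : ℕ), by have := j.isLt; omega⟩
      rw [B1c_apply, B2c_apply] at h1
      rw [dif_neg (by simp)] at h1
      rw [dif_pos (by constructor <;> simp)] at h1
      rw [show (⟨((⟨s + (j : ℕ), by have := j.isLt; omega⟩ : Fin n) : ℕ) - s,
        by simp⟩ : Fin (n - s)) = j from Fin.ext (by simp)] at h1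
      linarith
    have hmem : A u ∈ LinearMap.range (A : E →ₗ[ℝ] E) := LinearMap.mem_range_self _ u
    have hrepr : c.repr ⟨A u, hmem⟩ = 0 := by
      ext j
      rw [OrthonormalBasis.repr_apply_apply]
      exact hin j
    have hz : (⟨A u, hmem⟩ : LinearMap.range (A : E →ₗ[ℝ] E)) = 0 := by
      apply c.repr.injective
      rw [hrepr]; simp
    exact congrArg Subtype.val hz
  have huK : u ∈ LinearMap.ker (A : E →ₗ[ℝ] E) := by simpa [LinearMap.mem_ker] using hAu
  have hin : ∀ i : Fin s, ⟪(b i : E), u⟫ = 0 := by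
    intro i
    have h1 := hcoord ⟨(i : ℕ), i.isLt.trans hsn⟩
    rw [B1c_apply, B2c_apply] at h1
    rw [dif_pos (by simpa using i.isLt)] at h1
    rw [dif_neg (by simp [Nat.not_le.mpr i.isLt])] at h1
    rw [show (⟨((⟨(i : ℕ), i.isLt.trans hsn⟩ : Fin n) : ℕ), by simpa using i.isLt⟩ : Fin s) = i
      from Fin.ext (by simp)] at h1
    simpa [hAu] using h1
  have hrepr : b.repr ⟨u, huK⟩ = 0 := by
    ext i
    rw [OrthonormalBasis.repr_apply_apply]
    exact hin i
  have hz : (⟨u, huK⟩ : LinearMap.ker (A : E →ₗ[ℝ] E)) = 0 := by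
    apply b.repr.injective
    rw [hrepr]; simp
  exact congrArg Subtype.val hz

lemma model_exists (hsn : s < n) (A : E →L[ℝ] E)
    (hKs : Module.finrank ℝ (LinearMap.ker (A : E →ₗ[ℝ] E)) = s)
    (hRs : Module.finrank ℝ (LinearMap.range (A : E →ₗ[ℝ] E)) = n - s) :
    ∃ B₁ B₂ : E →L[ℝ] E,
      (∀ u : E, (B₁ + B₂.comp A) u = 0 → u = 0) ∧
      (∀ w : E, ∀ i : Fin n, (i : ℕ) < s → B₂ w i = 0) ∧
      (∀ w : E, ∀ i : Fin n, s ≤ (i : ℕ) → B₁ w i = 0) := by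
  let b : OrthonormalBasis (Fin s) ℝ (LinearMap.ker (A : E →ₗ[ℝ] E)) :=
    (stdOrthonormalBasis ℝ (LinearMap.ker (A : E →ₗ[ℝ] E))).reindex (finCongr hKs)
  let c : OrthonormalBasis (Fin (n - s)) ℝ (LinearMap.range (A : E →ₗ[ℝ] E)) :=
    (stdOrthonormalBasis ℝ (LinearMap.range (A : E →ₗ[ℝ] E))).reindex (finCongr hRs)
  refine ⟨B1c n s (fun i => (b i : E)), B2c n s (fun j => (c j : E)),
    fun u hu => Aprime_inj hsn A b c u hu, ?_, ?_⟩
  · intro w i hi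
    rw [B2c_apply, dif_neg (by omega)]
  · intro w i hi
    rw [B1c_apply, dif_neg (by omega)]

lemma kill (hsn : s ≤ n) (D L : E →L[ℝ] E)
    (hrank : Module.finrank ℝ (LinearMap.range (D : E →ₗ[ℝ] E)) = n - s)
    (hcomp : L.comp D = projL n s)
    (e : E) (he : projL n s e = 0) : D e = 0 := by
  have hmap : Submodule.map (L : E →ₗ[ℝ] E) (LinearMap.range (D : E →ₗ[ℝ] E))
      = LinearMap.range ((projL n s : E →L[ℝ] E) : E →ₗ[ℝ] E) := by
    rw [← LinearMap.range_comp]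
    congr 1
    have h0 : ((L.comp D : E →L[ℝ] E) : E →ₗ[ℝ] E)
        = (L : E →ₗ[ℝ] E).comp (D : E →ₗ[ℝ] E) := rfl
    rw [← h0, hcomp]
  have hfr : Module.finrank ℝ (Submodule.map (L : E →ₗ[ℝ] E) (LinearMap.range (D : E →ₗ[ℝ] E)))
      = Module.finrank ℝ (LinearMap.range (D : E →ₗ[ℝ] E)) := by
    rw [hmap, finrank_range_projL hsn, hrank]
  refine eq_zero_of_map_finrank_eq _ _ hfr (LinearMap.mem_range_self _ e) ?_
  show L (D e) = 0
  have := congrFun (congrArg (fun (T : E →L[ℝ] E) => (T : E → E)) hcomp) e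
  simp only [ContinuousLinearMap.coe_comp', Function.comp_apply] at this
  rw [this, he]

lemma const_along (ε : ℝ) (g : E → E) (Dg : E → (E →L[ℝ] E))
    (hg : ∀ y ∈ ball (0:E) ε, HasFDerivAt g (Dg y) y)
    (hkill : ∀ y ∈ ball (0:E) ε, ∀ e : E, projL n s e = 0 → Dg y e = 0)
    {y : E} (hy : y ∈ ball (0:E) ε) (hy0 : projL n s y = 0) : g y = g 0 := by
  have hmem : ∀ t ∈ Icc (0:ℝ) 1, t • y ∈ ball (0:E) ε := by
    intro t ht
    rw [mem_ball_zero_iff] at hy ⊢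
    calc ‖t • y‖ = |t| * ‖y‖ := by rw [norm_smul]; rfl
    _ ≤ 1 * ‖y‖ := by
        apply mul_le_mul_of_nonneg_right _ (norm_nonneg _)
        rw [abs_of_nonneg ht.1]; exact ht.2
    _ < ε := by simpa using hy
  have hG : ∀ t ∈ Icc (0:ℝ) 1, HasDerivAt (fun t : ℝ => g (t • y)) 0 t := by
    intro t ht
    have h1 : HasDerivAt (fun t : ℝ => t • y) y t := by
      simpa using (hasDerivAt_id t).smul_const y
    have h2 := (hg _ (hmem t ht)).comp_hasDerivAt t h1
    simpa [Function.comp_def, hkill _ (hmem t ht) y hy0] using h2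
  have := constant_of_has_deriv_right_zero
      (f := fun t : ℝ => g (t • y)) (a := 0) (b := 1)
      (fun t ht => (hG t ht).continuousAt.continuousWithinAt)
      (fun t ht => (hG t (Ico_subset_Icc_self ht)).hasDerivWithinAt)
      1 (by norm_num)
  simpa using this

lemma phi_hasFDerivAt (p : E) (B₁ B₂ : E →L[ℝ] E) (f : E → E)
    (hfdiff : Differentiable ℝ f) (z : E) :
    HasFDerivAt (fun x => B₁ (x - p) + B₂ (f x)) (B₁ + B₂.comp (fderiv ℝ f z)) z := by
  have h0 : HasFDerivAt (fun x : E => x - p) (ContinuousLinearMap.id ℝ _) z :=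
    (hasFDerivAt_id z).sub_const p
  have h1 : HasFDerivAt (fun x : E => B₁ (x - p)) B₁ z := by
    have h := B₁.hasFDerivAt.comp z h0
    rw [ContinuousLinearMap.comp_id] at h
    exact (h : _)
  have h2 : HasFDerivAt (fun x => B₂ (f x)) (B₂.comp (fderiv ℝ f z)) z :=
    B₂.hasFDerivAt.comp z (hfdiff z).hasFDerivAt
  exact h1.add h2

end Aux

section Core
variable {n s : ℕ}
local notation "E" => EuclideanSpace ℝ (Fin n)

set_option maxHeartbeats 1000000 in
lemma core (hsn : s < n)
    (f : E → E) (hf : ContDiff ℝ 2 f)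
    (M : Set E) (hMdef : M = {x | f x = 0})
    (G : Set E) (hG : IsOpen G) (hMG : M ⊆ G)
    (hker : ∀ x ∈ G, Module.finrank ℝ (LinearMap.ker (fderiv ℝ f x : E →ₗ[ℝ] E)) = s)
    {p : E} (hp : p ∈ M) :
    (∃ U : Set E, IsOpen U ∧ p ∈ U ∧
      ∃ φ ψ : E → E,
        ContDiffOn ℝ 2 φ U ∧ IsOpen (φ '' U) ∧ ContDiffOn ℝ 2 ψ (φ '' U) ∧
        (∀ z ∈ U, ψ (φ z) = z) ∧ (∀ w ∈ φ '' U, φ (ψ w) = w) ∧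
        M ∩ U = {x ∈ U | ∀ i : Fin n, s ≤ (i : ℕ) → φ x i = 0}) ∧
    (∀ v ∈ LinearMap.ker (fderiv ℝ f p : E →ₗ[ℝ] E), ∀ x : E,
        infDist x M = ‖x - p‖ → ⟪x - p, v⟫ = 0) := by
  have hpG : p ∈ G := hMG hp
  have hfp : f p = 0 := by rw [hMdef] at hp; exact hp
  have hfdiff : Differentiable ℝ f := hf.differentiable (by norm_num)
  have hKs : Module.finrank ℝ (LinearMap.ker (fderiv ℝ f p : E →ₗ[ℝ] E)) = s := hker p hpG
  have hRrank' : ∀ z ∈ G,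
      Module.finrank ℝ (LinearMap.range ((fderiv ℝ f z : E →L[ℝ] E) : E →ₗ[ℝ] E)) = n - s := by
    intro z hz
    have h1 := LinearMap.finrank_range_add_finrank_ker ((fderiv ℝ f z : E →L[ℝ] E) : E →ₗ[ℝ] E)
    rw [finrank_euclideanSpace_fin] at h1
    have h2 : LinearMap.ker ((fderiv ℝ f z : E →L[ℝ] E) : E →ₗ[ℝ] E)
        = LinearMap.ker (fderiv ℝ f z : E →ₗ[ℝ] E) := rfl
    rw [h2, hker z hz] at h1
    omega
  obtain ⟨B₁, B₂, hinj, hB₂low, hB₁high⟩ :=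
    model_exists hsn (fderiv ℝ f p) hKs (by
      have := hRrank' p hpG
      exact this)
  set φ : E → E := fun x => B₁ (x - p) + B₂ (f x) with hφdef
  have hφC : ContDiff ℝ 2 φ :=
    (B₁.contDiff.comp (contDiff_id.sub contDiff_const)).add (B₂.contDiff.comp hf)
  have hfdφ : ∀ z : E, HasFDerivAt φ (B₁ + B₂.comp (fderiv ℝ f z)) z :=
    fun z => phi_hasFDerivAt p B₁ B₂ f hfdiff z
  -- bijectivity of the model derivative
  have hinj' : Function.Injective (((B₁ + B₂.comp (fderiv ℝ f p)) : E →L[ℝ] E) : E →ₗ[ℝ] E) := by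
    intro u v huv
    refine sub_eq_zero.mp (hinj (u - v) ?_)
    have : (B₁ + B₂.comp (fderiv ℝ f p)) u = (B₁ + B₂.comp (fderiv ℝ f p)) v := huv
    rw [map_sub, this, sub_self]
  have hbij : Function.Bijective (((B₁ + B₂.comp (fderiv ℝ f p)) : E →L[ℝ] E) : E →ₗ[ℝ] E) :=
    ⟨hinj', (LinearMap.injective_iff_surjective.mp hinj')⟩
  let A'e : E ≃L[ℝ] E :=
    (LinearEquiv.ofBijective _ hbij).toContinuousLinearEquiv
  have hA'e : (A'e : E →L[ℝ] E) = B₁ + B₂.comp (fderiv ℝ f p) := by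
    ext x; rfl
  have hfdp : HasFDerivAt φ ((A'e : E →L[ℝ] E)) p := by
    rw [hA'e]; exact hfdφ p
  -- inverse function theorem
  let N := hφC.contDiffAt.toOpenPartialHomeomorph φ hfdp (by norm_num)
  have hNcoe : (N : E → E) = φ := ContDiffAt.toOpenPartialHomeomorph_coe _ _ _
  have hpsource : p ∈ N.source := ContDiffAt.mem_toOpenPartialHomeomorph_source _ _ _
  set ψ : E → E := ⇑N.symm with hψdef
  have hφp : φ p = 0 := by
    rw [hφdef]
    show B₁ (p - p) + B₂ (f p) = 0
    rw [sub_self, hfp, map_zero, map_zero, add_zero]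
  have hψCat : ContDiffAt ℝ 2 ψ 0 := by
    have h := hφC.contDiffAt.to_localInverse (f' := A'e) hfdp (by norm_num)
    rw [hφp] at h
    exact h
  obtain ⟨u0, hu0nhds, hψC⟩ := hψCat.contDiffOn le_rfl (by norm_num)
  have hψ0 : ψ 0 = p := by
    rw [← hφp, hψdef, ← hNcoe]
    exact N.left_inv hpsource
  have h0target : (0 : E) ∈ N.target := by
    rw [← hφp, ← hNcoe]
    exact N.map_source hpsource
  have h1 : N.target ∈ 𝓝 (0:E) := N.open_target.mem_nhds h0target
  have h2 : ψ ⁻¹' G ∈ 𝓝 (0:E) := by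
    have hcont : ContinuousAt ψ 0 := hψCat.continuousAt
    apply hcont.preimage_mem_nhds
    rw [hψ0]
    exact hG.mem_nhds hpG
  obtain ⟨ε, hε, hball⟩ :=
    Metric.mem_nhds_iff.mp (Filter.inter_mem (Filter.inter_mem h1 hu0nhds) h2)
  have hballT : ball (0:E) ε ⊆ N.target := fun y hy => ((hball hy).1).1
  have hballu : ball (0:E) ε ⊆ u0 := fun y hy => ((hball hy).1).2
  have hballG : ∀ y ∈ ball (0:E) ε, ψ y ∈ G := fun y hy => (hball hy).2
  set U : Set E := ψ '' (ball 0 ε) with hU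
  have hUeq : U = N.source ∩ N ⁻¹' (ball 0 ε) := by
    apply Subset.antisymm
    · rintro _ ⟨y, hy, rfl⟩
      refine ⟨N.map_target (hballT hy), ?_⟩
      rw [mem_preimage]
      have : N (N.symm y) = y := N.right_inv (hballT hy)
      rw [hψdef, this]
      exact hy
    · rintro x ⟨hx1, hx2⟩
      exact ⟨N x, mem_preimage.mp hx2, N.left_inv hx1⟩
  have hUopen : IsOpen U := by
    rw [hUeq]; exact N.isOpen_inter_preimage isOpen_ball
  have hpU : p ∈ U := ⟨0, mem_ball_self hε, hψ0⟩
  have hleft : ∀ z ∈ U, ψ (φ z) = z := by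
    intro z hz
    rw [hUeq] at hz
    rw [hψdef, ← hNcoe]
    exact N.left_inv hz.1
  have himg : φ '' U = ball 0 ε := by
    apply Subset.antisymm
    · rintro _ ⟨x, hx, rfl⟩
      rw [hUeq] at hx
      rw [← hNcoe]
      exact mem_preimage.mp hx.2
    · intro y hy
      refine ⟨ψ y, mem_image_of_mem ψ hy, ?_⟩
      rw [← hNcoe, hψdef]
      exact N.right_inv (hballT hy)
  have hright : ∀ w ∈ φ '' U, φ (ψ w) = w := by
    rw [himg]
    intro w hw
    rw [← hNcoe, hψdef]
    exact N.right_inv (hballT hw)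
  have hψC2 : ContDiffOn ℝ 2 ψ (ball (0:E) ε) := hψC.mono hballu
  have hUG : U ⊆ G := by
    rintro _ ⟨y, hy, rfl⟩
    exact hballG y hy
  -- differentiability of ψ on the ball, and the two chain-rule identities
  have hψdiffb : ∀ y' ∈ ball (0:E) ε, DifferentiableAt ℝ ψ y' := by
    intro y' hy'
    exact (hψC2.contDiffAt (isOpen_ball.mem_nhds hy')).differentiableAt (by norm_num)
  have hid2 : ∀ y' ∈ ball (0:E) ε,
      (fderiv ℝ ψ y').comp (B₁ + B₂.comp (fderiv ℝ f (ψ y'))) = ContinuousLinearMap.id ℝ E := by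
    intro y' hy'
    have hx'U : ψ y' ∈ U := mem_image_of_mem ψ hy'
    have hφx' : φ (ψ y') = y' := hright _ (by rw [himg]; exact hy')
    have hψd : HasFDerivAt ψ (fderiv ℝ ψ y') y' := (hψdiffb y' hy').hasFDerivAt
    have hψd' : HasFDerivAt ψ (fderiv ℝ ψ y') (φ (ψ y')) := by rw [hφx']; exact hψd
    have hcompφ : HasFDerivAt (fun z => ψ (φ z))
        ((fderiv ℝ ψ y').comp (B₁ + B₂.comp (fderiv ℝ f (ψ y')))) (ψ y') :=
      hψd'.comp (ψ y') (hfdφ (ψ y'))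
    have hEq3 : (fun z : E => z) =ᶠ[𝓝 (ψ y')] fun z => ψ (φ z) := by
      filter_upwards [hUopen.mem_nhds hx'U] with z hz
      exact (hleft z hz).symm
    exact (hcompφ.congr_of_eventuallyEq hEq3).unique (hasFDerivAt_id (ψ y'))
  -- the key set identity
  have hMU : M ∩ U = {x ∈ U | ∀ i : Fin n, s ≤ (i : ℕ) → φ x i = 0} := by
    apply Subset.antisymm
    · rintro x ⟨hxM, hxU⟩
      refine ⟨hxU, fun i hi => ?_⟩
      have hfx : f x = 0 := by rw [hMdef] at hxM; exact hxM
      show B₁ (x - p) i + B₂ (f x) i = 0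
      rw [hfx, map_zero, hB₁high _ i hi]
      show (0:ℝ) + (0:E) i = 0
      simp
    · rintro x ⟨hxU, hcoords⟩
      refine ⟨?_, hxU⟩
      rw [hMdef]
      show f x = 0
      have hyball : φ x ∈ ball (0:E) ε := by rw [← himg]; exact mem_image_of_mem φ hxU
      have hy0 : projL n s (φ x) = 0 := by
        ext i
        rw [projL_apply]
        by_cases h : s ≤ (i:ℕ)
        · rw [if_pos h]; exact hcoords i h
        · rw [if_neg h]; rfl
      have hgy : f x = (f ∘ ψ) (φ x) := by
        rw [Function.comp_apply, hleft x hxU]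
      rw [hgy]
      have hg0 : (f ∘ ψ) 0 = 0 := by rw [Function.comp_apply, hψ0, hfp]
      rw [← hg0]
      -- the derivative of g := f ∘ ψ
      have hDg : ∀ y' ∈ ball (0:E) ε,
          HasFDerivAt (f ∘ ψ) ((fderiv ℝ f (ψ y')).comp (fderiv ℝ ψ y')) y' := by
        intro y' hy'
        exact ((hfdiff (ψ y')).hasFDerivAt).comp y' (hψdiffb y' hy').hasFDerivAt
      refine const_along ε (f ∘ ψ) (fun y' => (fderiv ℝ f (ψ y')).comp (fderiv ℝ ψ y'))
        hDg ?_ hyball hy0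
      intro y' hy' e he
      have hx'G : ψ y' ∈ G := hballG y' hy'
      -- B₂ ∘ (f ∘ ψ) = projL on the ball
      have hfun : Set.EqOn (fun y'' => B₂ ((f ∘ ψ) y'')) (fun y'' => projL n s y'')
          (ball (0:E) ε) := by
        intro y'' hy''
        ext i
        by_cases h : s ≤ (i : ℕ)
        · have hφψ : φ (ψ y'') = y'' := hright _ (by rw [himg]; exact hy'')
          have := congrFun (congrArg (fun (z : E) => (z : Fin n → ℝ)) hφψ) i
          show B₂ ((f ∘ ψ) y'') i = projL n s y'' i
          rw [projL_apply, if_pos h]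
          have hsum : B₁ (ψ y'' - p) i + B₂ (f (ψ y'')) i = y'' i := this
          rw [hB₁high _ i h] at hsum
          simpa using hsum
        · show B₂ ((f ∘ ψ) y'') i = projL n s y'' i
          rw [projL_apply, if_neg h, hB₂low _ i (by omega)]
      have hD1 : HasFDerivAt (fun y'' => B₂ ((f ∘ ψ) y''))
          (B₂.comp ((fderiv ℝ f (ψ y')).comp (fderiv ℝ ψ y'))) y' :=
        B₂.hasFDerivAt.comp y' (hDg y' hy')
      have hD2 : HasFDerivAt (fun y'' => B₂ ((f ∘ ψ) y'')) (projL n s) y' := by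
        apply (projL n s).hasFDerivAt.congr_of_eventuallyEq
        filter_upwards [isOpen_ball.mem_nhds hy'] with z hz
        exact hfun hz
      have hcomp : B₂.comp ((fderiv ℝ f (ψ y')).comp (fderiv ℝ ψ y')) = projL n s :=
        hD1.unique hD2
      -- rank of the composition
      have hsurj : LinearMap.range ((fderiv ℝ ψ y' : E →L[ℝ] E) : E →ₗ[ℝ] E) = ⊤ := by
        rw [LinearMap.range_eq_top]
        intro e'
        refine ⟨(B₁ + B₂.comp (fderiv ℝ f (ψ y'))) e', ?_⟩
        have := congrFun (congrArg (fun (T : E →L[ℝ] E) => (T : E → E)) (hid2 y' hy')) e'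
        simpa using this
      have hrank : Module.finrank ℝ
          (LinearMap.range (((fderiv ℝ f (ψ y')).comp (fderiv ℝ ψ y') : E →L[ℝ] E) : E →ₗ[ℝ] E))
          = n - s := by
        have hcoe : (((fderiv ℝ f (ψ y')).comp (fderiv ℝ ψ y') : E →L[ℝ] E) : E →ₗ[ℝ] E)
            = ((fderiv ℝ f (ψ y') : E →L[ℝ] E) : E →ₗ[ℝ] E).comp
              ((fderiv ℝ ψ y' : E →L[ℝ] E) : E →ₗ[ℝ] E) := rfl
        rw [hcoe, LinearMap.range_comp_of_range_eq_top _ hsurj]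
        exact hRrank' _ hx'G
      exact kill hsn.le _ B₂ hrank hcomp e he
  constructor
  · exact ⟨U, hUopen, hpU, φ, ψ, hφC.contDiffOn, himg ▸ isOpen_ball,
      himg ▸ hψC2, hleft, hright, hMU⟩
  -- the perpendicularity statement
  · intro v hv x hx
    have hwlast : ∀ i : Fin n, s ≤ (i:ℕ) → ((B₁ + B₂.comp (fderiv ℝ f p)) v) i = 0 := by
      intro i hi
      show B₁ v i + B₂ (fderiv ℝ f p v) i = 0
      rw [show fderiv ℝ f p v = 0 from LinearMap.mem_ker.mp hv, map_zero, hB₁high v i hi]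
      show (0:ℝ) + (0:E) i = 0
      simp
    set w : E := (B₁ + B₂.comp (fderiv ℝ f p)) v with hwdef
    set δ : ℝ := ε / (‖w‖ + 1) with hδdef
    have hδpos : 0 < δ := div_pos hε (by positivity)
    have hγmem : ∀ t : ℝ, |t| < δ → t • w ∈ ball (0:E) ε := by
      intro t ht
      rw [mem_ball_zero_iff, norm_smul]
      have h1 : ‖t‖ * ‖w‖ ≤ |t| * (‖w‖ + 1) := by
        rw [Real.norm_eq_abs]
        apply mul_le_mul_of_nonneg_left (by linarith) (abs_nonneg t)
      have h2 : |t| * (‖w‖ + 1) < δ * (‖w‖ + 1) := by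
        apply mul_lt_mul_of_pos_right ht (by positivity)
      have h3 : δ * (‖w‖ + 1) = ε := by
        rw [hδdef]
        field_simp
      linarith
    have hγM : ∀ t : ℝ, |t| < δ → ψ (t • w) ∈ M := by
      intro t ht
      have hmem := hγmem t ht
      have hUmem : ψ (t • w) ∈ U := mem_image_of_mem ψ hmem
      have hmem2 : ψ (t • w) ∈ {x ∈ U | ∀ i : Fin n, s ≤ (i:ℕ) → φ x i = 0} := by
        refine ⟨hUmem, fun i hi => ?_⟩
        rw [hright _ (by rw [himg]; exact hmem)]
        show t * w i = 0
        rw [hwlast i hi, mul_zero]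
      rw [← hMU] at hmem2
      exact hmem2.1
    have hψdiff0 : DifferentiableAt ℝ ψ 0 := hψCat.differentiableAt (by norm_num)
    have hγd : HasDerivAt (fun t : ℝ => ψ (t • w)) ((fderiv ℝ ψ 0) w) 0 := by
      have h1 : HasDerivAt (fun t : ℝ => t • w) w 0 := by
        simpa using (hasDerivAt_id (0:ℝ)).smul_const w
      have h0 : HasFDerivAt ψ (fderiv ℝ ψ 0) ((0:ℝ) • w) := by
        rw [zero_smul]; exact hψdiff0.hasFDerivAt
      exact h0.comp_hasDerivAt 0 h1
    have hDv : (fderiv ℝ ψ 0) w = v := by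
      have h := hid2 0 (mem_ball_self hε)
      rw [hψ0] at h
      have := congrFun (congrArg (fun (T : E →L[ℝ] E) => (T : E → E)) h) v
      simpa [hwdef] using this
    rw [hDv] at hγd
    have hγ0 : ψ ((0:ℝ) • w) = p := by rw [zero_smul, hψ0]
    have hsub : HasDerivAt (fun t : ℝ => x - ψ (t • w)) (-v) 0 := by
      have h := (hasDerivAt_const 0 x).sub hγd
      rwa [zero_sub] at h
    have hq : HasDerivAt (fun t : ℝ => ⟪x - ψ (t • w), x - ψ (t • w)⟫)
        (⟪x - ψ ((0:ℝ) • w), -v⟫ + ⟪-v, x - ψ ((0:ℝ) • w)⟫) 0 :=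
      HasDerivAt.inner ℝ hsub hsub
    have hmin : IsLocalMin (fun t : ℝ => ⟪x - ψ (t • w), x - ψ (t • w)⟫) 0 := by
      filter_upwards [Metric.ball_mem_nhds (0:ℝ) hδpos] with t ht
      have htδ : |t| < δ := by simpa [Real.dist_eq] using mem_ball_iff_norm.mp ht
      have hMt := hγM t htδ
      have h1 : infDist x M ≤ ‖x - ψ (t • w)‖ := by
        rw [← dist_eq_norm]
        exact infDist_le_dist_of_mem hMt
      have h2 : (0:ℝ) ≤ infDist x M := infDist_nonneg
      show ⟪x - ψ ((0:ℝ) • w), x - ψ ((0:ℝ) • w)⟫ ≤ ⟪x - ψ (t • w), x - ψ (t • w)⟫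
      rw [real_inner_self_eq_norm_sq, real_inner_self_eq_norm_sq, hγ0, ← hx]
      calc infDist x M ^ 2 ≤ ‖x - ψ (t • w)‖ ^ 2 := by
            apply pow_le_pow_left₀ h2 h1
      _ = ‖x - ψ (t • w)‖ ^ 2 := rfl
    have hzero := hmin.hasDerivAt_eq_zero hq
    rw [hγ0] at hzero
    have h1 : ⟪x - p, -v⟫ = -⟪x - p, v⟫ := by rw [inner_neg_right]
    have h2 : ⟪-v, x - p⟫ = -⟪x - p, v⟫ := by rw [inner_neg_left, real_inner_comm]
    rw [h1, h2] at hzero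
    linarith
end Core

section Part2
variable {n : ℕ}
local notation "E" => EuclideanSpace ℝ (Fin n)

lemma sv_bound (A : E →L[ℝ] E) (ctilde : ℝ)
    (hc : ctilde ≤ smallestPosSV A) {w : E} (hw : w ∈ (LinearMap.ker (A : E →ₗ[ℝ] E))ᗮ) :
    ctilde * ‖w‖ ≤ ‖A w‖ := by
  rcases eq_or_ne w 0 with rfl | hw0
  · simp
  · have hnorm : 0 < ‖w‖ := norm_pos_iff.mpr hw0
    set v : E := ‖w‖⁻¹ • w with hv
    have hvmem : v ∈ (LinearMap.ker (A : E →ₗ[ℝ] E))ᗮ := Submodule.smul_mem _ _ hw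
    have hvnorm : ‖v‖ = 1 := norm_smul_inv_norm hw0
    have hmem : ‖A v‖ ∈ {r : ℝ | ∃ v ∈ (LinearMap.ker (A : E →ₗ[ℝ] E))ᗮ, ‖v‖ = 1 ∧ r = ‖A v‖} :=
      ⟨v, hvmem, hvnorm, rfl⟩
    have hbdd : BddBelow {r : ℝ | ∃ v ∈ (LinearMap.ker (A : E →ₗ[ℝ] E))ᗮ, ‖v‖ = 1 ∧ r = ‖A v‖} := by
      refine ⟨0, ?_⟩
      rintro r ⟨v', -, -, rfl⟩
      exact norm_nonneg _
    have h1 : ctilde ≤ ‖A v‖ := le_trans hc (csInf_le hbdd hmem)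
    have h2 : ‖A v‖ = ‖w‖⁻¹ * ‖A w‖ := by
      rw [hv, map_smul, norm_smul, Real.norm_eq_abs, abs_of_nonneg (by positivity)]
    rw [h2] at h1
    calc ctilde * ‖w‖ ≤ (‖w‖⁻¹ * ‖A w‖) * ‖w‖ :=
          mul_le_mul_of_nonneg_right h1 (norm_nonneg w)
    _ = ‖A w‖ := by field_simp
    
lemma taylor (f : E → E)
    (hfdiff : Differentiable ℝ f) (L : NNReal) (p : E) (r : ℝ)
    (hLip : LipschitzOnWith L (fderiv ℝ f) (ball p r))
    {a b : E} (ha : a ∈ ball p r) (hb : b ∈ ball p r) :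
    ‖f b - f a - fderiv ℝ f a (b - a)‖ ≤ (L : ℝ) * ‖b - a‖ ^ 2 := by
  set A := fderiv ℝ f a with hA
  have hseg : segment ℝ a b ⊆ ball p r := (convex_ball p r).segment_subset ha hb
  have hdiff : ∀ z ∈ segment ℝ a b, DifferentiableAt ℝ (fun z => f z - A z) z :=
    fun z hz => (hfdiff z).sub A.differentiableAt
  have hbound : ∀ z ∈ segment ℝ a b, ‖fderiv ℝ (fun z => f z - A z) z‖ ≤ (L:ℝ) * ‖b - a‖ := by
    intro z hz
    have hfd : fderiv ℝ (fun z => f z - A z) z = fderiv ℝ f z - A := by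
      rw [fderiv_fun_sub (hfdiff z) A.differentiableAt, A.fderiv]
    rw [hfd]
    have h1 : ‖fderiv ℝ f z - A‖ = dist (fderiv ℝ f z) (fderiv ℝ f a) := by
      rw [dist_eq_norm, hA]
    have h2 : dist (fderiv ℝ f z) (fderiv ℝ f a) ≤ (L:ℝ) * dist z a :=
      hLip.dist_le_mul z (hseg hz) a ha
    have h3 : dist z a ≤ ‖b - a‖ := by
      obtain ⟨u, v, hu, hv, huv, rfl⟩ := hz
      rw [dist_eq_norm, show u • a + v • b - a = v • (b - a) by
        rw [show u = 1 - v by linarith]; module, norm_smul]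
      calc ‖v‖ * ‖b - a‖ ≤ 1 * ‖b - a‖ := by
            apply mul_le_mul_of_nonneg_right _ (norm_nonneg _)
            rw [Real.norm_eq_abs, abs_of_nonneg hv]; linarith
      _ = ‖b - a‖ := one_mul _
    calc ‖fderiv ℝ f z - A‖ ≤ (L:ℝ) * dist z a := by rw [h1]; exact h2
    _ ≤ (L:ℝ) * ‖b - a‖ := mul_le_mul_of_nonneg_left h3 (by positivity)
  have hmain := Convex.norm_image_sub_le_of_norm_fderiv_le hdiff hbound
    (convex_segment a b) (left_mem_segment ℝ a b) (right_mem_segment ℝ a b)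
  have hEq : f b - A b - (f a - A a) = f b - f a - A (b - a) := by
    rw [map_sub]; abel
  rw [hEq] at hmain
  calc ‖f b - f a - A (b - a)‖ ≤ (L:ℝ) * ‖b - a‖ * ‖b - a‖ := hmain
  _ = (L:ℝ) * ‖b - a‖ ^ 2 := by ring
end Part2

set_option maxHeartbeats 1000000 in
/-- Under the constant-rank assumptions, and if moreover the smallest
nonzero singular value of `Df_x` is bounded below by `ctilde > 0` on `G`, then `M` is a `C²`
manifold and there exist an open set `V` and `c > 0` with `M ⊆ V ⊆ E(M)` such that
`c · dist(x, M) ≤ ‖f(x)‖` for all `x ∈ V`. -/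
theorem statement4
    (n s : ℕ) (hs0 : 0 < s) (hsn : s < n)
    (f : EuclideanSpace ℝ (Fin n) → EuclideanSpace ℝ (Fin n))
    (hf : ContDiff ℝ 2 f)
    (M : Set (EuclideanSpace ℝ (Fin n))) (hMdef : M = {x | f x = 0})
    (hMne : M.Nonempty)
    (G : Set (EuclideanSpace ℝ (Fin n))) (hG : IsOpen G) (hMG : M ⊆ G)
    (hker : ∀ x ∈ G, Module.finrank ℝ (LinearMap.ker (fderiv ℝ f x : EuclideanSpace ℝ (Fin n) →ₗ[ℝ] EuclideanSpace ℝ (Fin n))) = s)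
    (ctilde : ℝ) (hctilde : 0 < ctilde)
    (hsv : ∀ x ∈ G, ctilde ≤ smallestPosSV (fderiv ℝ f x)) :
    (∀ p ∈ M, ∃ U : Set (EuclideanSpace ℝ (Fin n)), IsOpen U ∧ p ∈ U ∧
      ∃ φ ψ : EuclideanSpace ℝ (Fin n) → EuclideanSpace ℝ (Fin n),
        ContDiffOn ℝ 2 φ U ∧ IsOpen (φ '' U) ∧ ContDiffOn ℝ 2 ψ (φ '' U) ∧
        (∀ z ∈ U, ψ (φ z) = z) ∧ (∀ w ∈ φ '' U, φ (ψ w) = w) ∧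
        M ∩ U = {x ∈ U | ∀ i : Fin n, s ≤ (i : ℕ) → φ x i = 0}) ∧
    ∃ V : Set (EuclideanSpace ℝ (Fin n)), ∃ c : ℝ, IsOpen V ∧ 0 < c ∧
      M ⊆ V ∧ V ⊆ interior {x | ∃! ξ, ξ ∈ M ∧ infDist x M = ‖x - ξ‖} ∧
      ∀ x ∈ V, c * infDist x M ≤ ‖f x‖ := by
  have hMclosed : IsClosed M := by
    rw [hMdef]
    exact isClosed_eq hf.continuous continuous_const
  have hfdiff : Differentiable ℝ f := hf.differentiable (by norm_num)
  have hcore := fun (p : EuclideanSpace ℝ (Fin n)) (hp : p ∈ M) =>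
    core hsn f hf M hMdef G hG hMG hker hp
  have hperp' : ∀ p ∈ M, ∀ x : EuclideanSpace ℝ (Fin n), infDist x M = ‖x - p‖ →
      x - p ∈ (LinearMap.ker (fderiv ℝ f p : EuclideanSpace ℝ (Fin n) →ₗ[ℝ] EuclideanSpace ℝ (Fin n)))ᗮ := by
    intro p hp x hx
    rw [Submodule.mem_orthogonal]
    intro u hu
    rw [real_inner_comm]
    exact (hcore p hp).2 u hu x hx
  refine ⟨fun p hp => (hcore p hp).1, ?_⟩
  -- local statement at each p ∈ M
  have hlocal : ∀ p ∈ M, ∃ ρ > 0, ∀ x ∈ ball p ρ,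
      (∃! ξ, ξ ∈ M ∧ infDist x M = ‖x - ξ‖) ∧ ctilde / 2 * infDist x M ≤ ‖f x‖ := by
    intro p hp
    have hpG := hMG hp
    have hfC1 : ContDiff ℝ 1 (fderiv ℝ f) := hf.fderiv_right (by norm_num)
    obtain ⟨L, t, htnhds, hLip0⟩ := hfC1.contDiffAt.exists_lipschitzOnWith
    obtain ⟨r0, hr0, hball0⟩ := Metric.mem_nhds_iff.mp htnhds
    have hLip : LipschitzOnWith L (fderiv ℝ f) (ball p r0) := hLip0.mono hball0
    set Lr : ℝ := (L : ℝ) + 1 with hLrdef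
    have hLrpos : 0 < Lr := by positivity
    have hLLr : (L : ℝ) ≤ Lr := by rw [hLrdef]; linarith
    set ρ : ℝ := min (r0 / 4) (ctilde / (8 * Lr)) with hρdef
    have hρpos : 0 < ρ := lt_min (by linarith) (by positivity)
    have hρr : ρ ≤ r0 / 4 := min_le_left _ _
    have hρc : ρ ≤ ctilde / (8 * Lr) := min_le_right _ _
    refine ⟨ρ, hρpos, fun x hx => ?_⟩
    have hxp : ‖x - p‖ < ρ := by
      rw [← dist_eq_norm]; exact mem_ball.mp hx
    have hdle : infDist x M ≤ ‖x - p‖ := by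
      rw [← dist_eq_norm]; exact infDist_le_dist_of_mem hp
    -- any minimizing point is in ball p r0
    have hnear_ball : ∀ ξ, ξ ∈ M → infDist x M = ‖x - ξ‖ → ξ ∈ ball p r0 := by
      intro ξ hξM hξd
      rw [mem_ball, dist_eq_norm]
      have h1 : ‖ξ - p‖ ≤ ‖ξ - x‖ + ‖x - p‖ := norm_sub_le_norm_sub_add_norm_sub ξ x p
      have h2 : ‖ξ - x‖ = ‖x - ξ‖ := norm_sub_rev ξ x
      have h3 : ‖x - ξ‖ ≤ ‖x - p‖ := by rw [← hξd]; exact hdle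
      linarith
    have hxball : x ∈ ball p r0 := by
      rw [mem_ball, dist_eq_norm]
      linarith
    -- uniqueness of the minimizer
    have huniq : ∀ ξ₁ ξ₂, ξ₁ ∈ M → ξ₂ ∈ M → infDist x M = ‖x - ξ₁‖ →
        infDist x M = ‖x - ξ₂‖ → ξ₁ = ξ₂ := by
      intro ξ₁ ξ₂ h1M h2M h1d h2d
      have hb1 : ξ₁ ∈ ball p r0 := hnear_ball ξ₁ h1M h1d
      have hb2 : ξ₂ ∈ ball p r0 := hnear_ball ξ₂ h2M h2d
      have hperp1 : x - ξ₁ ∈ (LinearMap.ker (fderiv ℝ f ξ₁ : EuclideanSpace ℝ (Fin n) →ₗ[ℝ] EuclideanSpace ℝ (Fin n)))ᗮ := hperp' ξ₁ h1M x h1d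
      have hf1 : f ξ₁ = 0 := by rw [hMdef] at h1M; exact h1M
      have hf2 : f ξ₂ = 0 := by rw [hMdef] at h2M; exact h2M
      set u : EuclideanSpace ℝ (Fin n) := ξ₂ - ξ₁ with hudef
      have htay := taylor f hfdiff L p r0 hLip hb1 hb2
      have hDu : ‖fderiv ℝ f ξ₁ u‖ ≤ (L:ℝ) * ‖u‖^2 := by
        have : f ξ₂ - f ξ₁ - fderiv ℝ f ξ₁ (ξ₂ - ξ₁) = -(fderiv ℝ f ξ₁ u) := by
          rw [hf1, hf2, hudef]; abel
        rw [this, norm_neg] at htay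
        exact htay
      set K1 := LinearMap.ker (fderiv ℝ f ξ₁ : EuclideanSpace ℝ (Fin n) →ₗ[ℝ] EuclideanSpace ℝ (Fin n)) with hK1
      set uK : EuclideanSpace ℝ (Fin n) := (K1.orthogonalProjectionOnto u : EuclideanSpace ℝ (Fin n)) with huK
      have huN : u - uK ∈ K1ᗮ := K1.sub_starProjection_mem_orthogonal u
      have hDuN : fderiv ℝ f ξ₁ (u - uK) = fderiv ℝ f ξ₁ u := by
        rw [map_sub]
        have hmem : uK ∈ K1 := (K1.orthogonalProjectionOnto u).2
        have : fderiv ℝ f ξ₁ uK = 0 := hmem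
        rw [this, sub_zero]
      have hsv1 : ctilde * ‖u - uK‖ ≤ ‖fderiv ℝ f ξ₁ (u - uK)‖ :=
        sv_bound (fderiv ℝ f ξ₁) ctilde (hsv ξ₁ (hMG h1M)) huN
      have hbound : ctilde * ‖u - uK‖ ≤ (L:ℝ) * ‖u‖^2 := by
        rw [hDuN] at hsv1; linarith
      have hinnerK : ⟪x - ξ₁, uK⟫ = 0 := by
        have hmem : uK ∈ K1 := (K1.orthogonalProjectionOnto u).2
        have := (Submodule.mem_orthogonal K1 (x - ξ₁)).mp hperp1 uK hmem
        rw [real_inner_comm]; exact this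
      have hinner : ⟪x - ξ₁, u⟫ ≤ ‖x - ξ₁‖ * ‖u - uK‖ := by
        have h0 : ⟪x - ξ₁, u - uK⟫ = ⟪x - ξ₁, u⟫ - ⟪x - ξ₁, uK⟫ :=
          inner_sub_right _ _ _
        have h1 := real_inner_le_norm (x - ξ₁) (u - uK)
        linarith [hinnerK]
      have hnormeq : ‖x - ξ₂‖^2 = ‖x - ξ₁‖^2 - 2*⟪x - ξ₁, u⟫ + ‖u‖^2 := by
        have h := norm_sub_sq_real (x - ξ₁) u
        rw [show x - ξ₁ - u = x - ξ₂ by rw [hudef]; abel] at h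
        exact h
      have hdd : ‖x - ξ₂‖ = ‖x - ξ₁‖ := by rw [← h2d, h1d]
      have heq : 2*⟪x - ξ₁, u⟫ = ‖u‖^2 := by
        rw [hdd] at hnormeq; linarith
      have hd1 : ‖x - ξ₁‖ ≤ ρ := by rw [← h1d]; linarith
      -- combine
      have hzero : ‖u‖ = 0 := by
        by_contra hne
        have hupos : 0 < ‖u‖ := lt_of_le_of_ne (norm_nonneg u) (Ne.symm hne)
        have hNnonneg : 0 ≤ ‖u - uK‖ := norm_nonneg _
        have hd1' : 0 ≤ ‖x - ξ₁‖ := norm_nonneg _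
        have hρLr : ρ * (8 * Lr) ≤ ctilde := (le_div_iff₀ (by positivity)).mp hρc
        have h1 : (2 * ‖x - ξ₁‖) * (ctilde * ‖u - uK‖) ≤ (2 * ‖x - ξ₁‖) * ((L:ℝ) * ‖u‖^2) :=
          mul_le_mul_of_nonneg_left hbound (by positivity)
        have h2 : (2 * ctilde) * ⟪x - ξ₁, u⟫ ≤ (2 * ctilde) * (‖x - ξ₁‖ * ‖u - uK‖) :=
          mul_le_mul_of_nonneg_left hinner (by positivity)
        have h3 : ‖x - ξ₁‖ * (L:ℝ) ≤ ρ * Lr :=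
          mul_le_mul hd1 hLLr L.coe_nonneg (le_of_lt hρpos)
        have h4 : (‖x - ξ₁‖ * (L:ℝ)) * (2 * ‖u‖^2) ≤ (ρ * Lr) * (2 * ‖u‖^2) :=
          mul_le_mul_of_nonneg_right h3 (by positivity)
        have h5 : (ρ * (8 * Lr)) * ‖u‖^2 ≤ ctilde * ‖u‖^2 :=
          mul_le_mul_of_nonneg_right hρLr (sq_nonneg _)
        have h6 : ctilde * (2 * ⟪x - ξ₁, u⟫) = ctilde * ‖u‖^2 := by
          rw [heq]
        have h7 : 0 < ctilde * ‖u‖^2 := by positivity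
        linarith
      have : u = 0 := norm_eq_zero.mp hzero
      have : ξ₂ - ξ₁ = 0 := this
      have := sub_eq_zero.mp this
      exact this.symm
    -- existence of a nearest point
    obtain ⟨ξ, hξM, hξd⟩ := hMclosed.exists_infDist_eq_dist hMne x
    have hd : infDist x M = ‖x - ξ‖ := by rw [hξd, dist_eq_norm]
    constructor
    · exact ⟨ξ, ⟨hξM, hd⟩, fun ξ' h' => huniq ξ' ξ h'.1 hξM h'.2 hd⟩
    -- the inequality
    · have hbξ : ξ ∈ ball p r0 := hnear_ball ξ hξM hd
      have hfξ : f ξ = 0 := by rw [hMdef] at hξM; exact hξM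
      have hperpx : x - ξ ∈ (LinearMap.ker (fderiv ℝ f ξ : EuclideanSpace ℝ (Fin n) →ₗ[ℝ] EuclideanSpace ℝ (Fin n)))ᗮ := hperp' ξ hξM x hd
      have hsvx : ctilde * ‖x - ξ‖ ≤ ‖fderiv ℝ f ξ (x - ξ)‖ :=
        sv_bound (fderiv ℝ f ξ) ctilde (hsv ξ (hMG hξM)) hperpx
      have htay := taylor f hfdiff L p r0 hLip hbξ hxball
      rw [hfξ, sub_zero] at htay
      -- ‖D(x-ξ)‖ ≤ ‖f x‖ + L‖x-ξ‖²
      have htri : ‖fderiv ℝ f ξ (x - ξ)‖ ≤ ‖f x‖ + ‖f x - fderiv ℝ f ξ (x - ξ)‖ := by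
        have := norm_sub_le (f x) (f x - fderiv ℝ f ξ (x - ξ))
        rw [show f x - (f x - fderiv ℝ f ξ (x - ξ)) = fderiv ℝ f ξ (x - ξ) by abel] at this
        exact this
      have hxd : ‖x - ξ‖ ≤ ρ := by rw [← hd]; linarith
      have hLsmall : (L:ℝ) * ‖x - ξ‖^2 ≤ ctilde / 2 * ‖x - ξ‖ := by
        have hρLr : 8 * Lr * ρ ≤ ctilde := by
          have := hρc
          rw [le_div_iff₀ (by positivity)] at this
          linarith
        have h0 : 0 ≤ ‖x - ξ‖ := norm_nonneg _
        have hA : (L:ℝ) * ρ ≤ ctilde / 8 := by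
          have := mul_le_mul_of_nonneg_right hLLr (le_of_lt hρpos)
          linarith
        have hB : ((L:ℝ) * ρ) * ‖x - ξ‖ ≤ (ctilde / 8) * ‖x - ξ‖ :=
          mul_le_mul_of_nonneg_right hA h0
        have hC : ((L:ℝ) * ‖x - ξ‖) * ‖x - ξ‖ ≤ ((L:ℝ) * ‖x - ξ‖) * ρ :=
          mul_le_mul_of_nonneg_left hxd (mul_nonneg L.coe_nonneg h0)
        nlinarith [hB, hC]
      rw [hd]
      linarith [htay, htri, hsvx, hLsmall]
  choose! ρV hρVpos hρV using hlocal
  refine ⟨⋃ p ∈ M, ball p (ρV p), ctilde / 2,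
    isOpen_biUnion (fun p _ => isOpen_ball), half_pos hctilde,
    fun p hp => mem_biUnion hp (mem_ball_self (hρVpos p hp)), ?_, ?_⟩
  · apply interior_maximal
    · rintro x hx
      rw [mem_iUnion₂] at hx
      obtain ⟨p, hp, hxp⟩ := hx
      exact (hρV p hp x hxp).1
    · exact isOpen_biUnion fun p _ => isOpen_ball
  · intro x hx
    rw [mem_iUnion₂] at hx
    obtain ⟨p, hp, hxp⟩ := hx
    exact (hρV p hp x hxp).2
end

section
/- Let M ⊆ ℝⁿ, let K ⊆ ℝⁿ be compact, let ℓ be a running cost, let S : ℝⁿ → [0,∞) be bounded on compact sets, and let α ∈ 𝒦. Fix constants C_ℓ > 0 and B := sup_{x ∈ K} S(x). Suppose T > 0 and (x*, u*) is a trajectory–control pair with x*(0), x*(T) ∈ K such that (i) ∫₀ᵀ ℓ(x*(t), u*(t)) dt < C_ℓ and (ii) the dissipation inequality S(x*(T)) − S(x*(0)) ≤ ∫₀ᵀ [ℓ(x*(t), u*(t)) − α(dist(x*(t), M))] dt holds. Then for every ε > 0, λ({t ∈ [0,T] | dist(x*(t), M) > ε}) ≤ (C_ℓ + B) / α(ε);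 in particular this bound is independent of T. -/
open Set Metric MeasureTheory

/-- (Manifold dissipativity implies a turnpike-type measure bound.)
Let `M ⊆ ℝⁿ`, `K ⊆ ℝⁿ` compact, `ℓ` a running cost, `S : ℝⁿ → [0,∞)` bounded on compact
sets, `α` of class `𝒦`, `C_ℓ > 0` and `B = sup_{x ∈ K} S(x)`.  If a trajectory–control
pair `(x, u)` on `[0,T]` with endpoints in `K` satisfies the cost bound
`∫₀ᵀ ℓ(x,u) dt < C_ℓ` and the dissipation inequality
`S(x(T)) − S(x(0)) ≤ ∫₀ᵀ (ℓ(x,u) − α(dist(x, M))) dt`, then for every `ε > 0` the time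
spent at distance `> ε` from `M` is at most `(C_ℓ + B)/α(ε)`, independently of `T`. -/
theorem statement8
    (n m : ℕ)
    (M K : Set (EuclideanSpace ℝ (Fin n))) (hK : IsCompact K)
    (ℓ : EuclideanSpace ℝ (Fin n) → EuclideanSpace ℝ (Fin m) → ℝ)
    (S : EuclideanSpace ℝ (Fin n) → ℝ)
    (hS0 : ∀ z, 0 ≤ S z)
    (hSb : ∀ C : Set (EuclideanSpace ℝ (Fin n)), IsCompact C → ∃ b : ℝ, ∀ z ∈ C, S z ≤ b)
    (α : ℝ → ℝ) (hα0 : α 0 = 0)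
    (hαc : ContinuousOn α (Ici 0)) (hαm : StrictMonoOn α (Ici 0))
    (Cℓ B : ℝ) (hCℓ : 0 < Cℓ) (hB : B = sSup (S '' K))
    (T : ℝ) (hT : 0 < T)
    (x : ℝ → EuclideanSpace ℝ (Fin n)) (u : ℝ → EuclideanSpace ℝ (Fin m))
    (hx0 : x 0 ∈ K) (hxT : x T ∈ K) (hxc : Continuous x)
    (hint : IntegrableOn (fun t => ℓ (x t) (u t)) (Icc 0 T))
    (hcost : (∫ t in Icc 0 T, ℓ (x t) (u t)) < Cℓ)
    (hdiss : S (x T) - S (x 0) ≤ ∫ t in Icc 0 T, (ℓ (x t) (u t) - α (infDist (x t) M))) :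
    ∀ ε : ℝ, 0 < ε →
      volume {t ∈ Icc 0 T | ε < infDist (x t) M} ≤ ENNReal.ofReal ((Cℓ + B) / α ε) := by
  intro ε hε
  set d : ℝ → ℝ := fun t => infDist (x t) M with hd
  set g : ℝ → ℝ := fun t => α (d t) with hg
  have hdc : Continuous d := (continuous_infDist_pt M).comp hxc
  have hdnn : ∀ t, 0 ≤ d t := fun t => infDist_nonneg
  have hgc : ContinuousOn g (Icc 0 T) :=
    hαc.comp hdc.continuousOn (fun t _ => hdnn t)
  have hg_int : IntegrableOn g (Icc 0 T) volume :=
    hgc.integrableOn_compact isCompact_Icc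
  have hgnn : ∀ t, 0 ≤ g t := by
    intro t
    rcases eq_or_lt_of_le (hdnn t) with h | h
    · simp [hg, ← h, hα0]
    · have := hαm (Set.mem_Ici.mpr le_rfl) (le_of_lt h : d t ∈ Ici 0) h
      rw [hα0] at this
      exact le_of_lt this
  -- bound on ∫ g
  have hBb : S (x 0) ≤ B := by
    rw [hB]
    obtain ⟨b, hb⟩ := hSb K hK
    exact le_csSup ⟨b, by rintro y ⟨z, hz, rfl⟩; exact hb z hz⟩ ⟨x 0, hx0, rfl⟩
  have hsplit : (∫ t in Icc 0 T, (ℓ (x t) (u t) - α (infDist (x t) M)))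
      = (∫ t in Icc 0 T, ℓ (x t) (u t)) - ∫ t in Icc 0 T, g t :=
    integral_sub hint hg_int
  have hgint_le : (∫ t in Icc 0 T, g t) ≤ Cℓ + B := by
    rw [hsplit] at hdiss
    have := hS0 (x T)
    linarith
  have hαε : 0 < α ε := by
    have := hαm (Set.mem_Ici.mpr le_rfl) (le_of_lt hε : ε ∈ Ici 0) hε
    rwa [hα0] at this
  -- Chebyshev
  set μ := volume.restrict (Icc 0 T) with hμ
  have hcheb : α ε * (μ {t | α ε ≤ g t}).toReal ≤ ∫ t, g t ∂μ :=
    mul_meas_ge_le_integral_of_nonneg (Filter.Eventually.of_forall hgnn) hg_int (α ε)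
  have hsub : {t | ε < d t} ⊆ {t | α ε ≤ g t} := by
    intro t ht
    exact le_of_lt (hαm (le_of_lt hε) (le_trans (le_of_lt hε) (le_of_lt ht)) ht)
  have hmeas : MeasurableSet {t : ℝ | ε < d t} := (isOpen_lt continuous_const hdc).measurableSet
  have hset : {t ∈ Icc 0 T | ε < infDist (x t) M} = {t | ε < d t} ∩ Icc 0 T := by
    ext t; simp [hd, and_comm]
  have hvol : volume {t ∈ Icc 0 T | ε < infDist (x t) M} = μ {t | ε < d t} := by
    rw [hset, hμ, Measure.restrict_apply hmeas]
  have hfin : ∀ s : Set ℝ, μ s ≠ ⊤ := by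
    intro s
    have h1 : μ s ≤ μ Set.univ := measure_mono (subset_univ _)
    have h2 : μ Set.univ = volume (Icc 0 T) := by rw [hμ, Measure.restrict_apply_univ]
    rw [h2] at h1
    exact ne_top_of_le_ne_top (by simp [Real.volume_Icc]) h1
  rw [hvol]
  have h1 : (μ {t | ε < d t}).toReal ≤ (μ {t | α ε ≤ g t}).toReal :=
    ENNReal.toReal_mono (hfin _) (measure_mono hsub)
  have h2 : (μ {t | ε < d t}).toReal ≤ (Cℓ + B) / α ε := by
    refine le_trans h1 ?_
    rw [le_div_iff₀ hαε, mul_comm]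
    exact le_trans hcheb hgint_le
  rw [ENNReal.le_ofReal_iff_toReal_le (hfin _) ?_]
  · exact h2
  · have : 0 ≤ Cℓ + B := by have := hS0 (x 0); linarith
    positivity
end

section
/- Let E, J, R : ℝⁿ → ℝ^{n×n}, η : ℝⁿ → ℝⁿ, B : ℝⁿ → ℝ^{n×m} be continuous with J(x) = −J(x)ᵀ and R(x) = R(x)ᵀ ⪰ 0 for all x, and let H : ℝⁿ → [0,∞) be C¹ with ∇H(x) = E(x)ᵀ η(x). Assume the map f : ℝⁿ → ℝⁿ, f(x) := R(x)^{1/2} η(x), is C², that M := {x | f(x) = 0} is nonempty, that there are an open neighborhood G of M and 0 < s < n with dim(ker Df_x) = s for all x ∈ G, and that the smallest nonzero singular value of Df_x is ≥ c̃ > 0 on G; let V ⊇ M be the open set and c > 0 the constant from the distance estimate c·dist(x,M) ≤ ‖f(x)‖ on V. Then for every T > 0, every control u and differentiable solution x of E(x)ẋ = (J(x) − R(x))η(x) + B(x)u with output y = B(x)ᵀη(x) whose trajectory remains in V for all t ∈ [0,T] satisfies the dissipation inequality H(x(T)) − H(x(0)) ≤ ∫₀ᵀ [y(t)ᵀ u(t)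 − α(dist(x(t), M))] dt, with α(σ) := c²σ² belonging to the class 𝒦. In particular, the optimal control problem of minimizing ∫₀ᵀ yᵀu dt subject to these dynamics is dissipative with respect to the manifold M with storage function H. -/
/-!
Along a solution, `d/dt H(x) = ⟪∇H, ẋ⟫ = ⟪η, Eẋ⟫ = ⟪η, (J - R)η + Bu⟫ = yᵀu - ‖R^{1/2}η‖²`,
since the skew part `J` does no work. Integrating this energy balance and bounding
`‖R^{1/2}η‖ = ‖f(x)‖ ≥ c·dist(x, M)` on `V` gives the dissipation inequality.
-/

open Set Metric MeasureTheory
open scoped RealInnerProductSpace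

namespace ContinuousLinearMap

variable {X U : Type*} [NormedAddCommGroup X] [InnerProductSpace ℝ X] [CompleteSpace X]
  [NormedAddCommGroup U] [InnerProductSpace ℝ U] [CompleteSpace U]

theorem inner_apply_self_eq_zero_of_adjoint_eq_neg {J : X →L[ℝ] X} (hJ : adjoint J = -J)
    (v : X) : ⟪v, J v⟫ = 0 := by
  have h := adjoint_inner_left J v v
  rw [hJ, neg_apply, inner_neg_left, real_inner_comm] at h
  linarith

theorem inner_comp_self_apply_of_adjoint_eq_self {S : X →L[ℝ] X} (hS : adjoint S = S)
    (v : X) : ⟪v, S.comp S v⟫ = ‖S v‖ ^ 2 := by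
  rw [comp_apply, ← adjoint_inner_left, hS, real_inner_self_eq_norm_sq]

theorem inner_portHamiltonian_eq {J R S : X →L[ℝ] X} {B : U →L[ℝ] X}
    (hJ : adjoint J = -J) (hS : adjoint S = S) (hSR : S.comp S = R) (η : X) (u : U) :
    ⟪η, (J - R) η + B u⟫ = ⟪adjoint B η, u⟫ - ‖S η‖ ^ 2 := by
  rw [inner_add_right, sub_apply, inner_sub_right, inner_apply_self_eq_zero_of_adjoint_eq_neg hJ,
    ← hSR, inner_comp_self_apply_of_adjoint_eq_self hS, adjoint_inner_left]
  ring

theorem hasDerivAt_comp_of_portHamiltonian {H : X → ℝ} {γ : ℝ → X} {t : ℝ} {v η : X} {u : U}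
    {E J R S : X →L[ℝ] X} {B : U →L[ℝ] X} (hH : DifferentiableAt ℝ H (γ t))
    (hgrad : gradient H (γ t) = adjoint E η) (hγ : HasDerivAt γ v t)
    (hdyn : E v = (J - R) η + B u)
    (hJ : adjoint J = -J) (hS : adjoint S = S) (hSR : S.comp S = R) :
    HasDerivAt (fun t => H (γ t)) (⟪adjoint B η, u⟫ - ‖S η‖ ^ 2) t := by
  refine (hH.hasFDerivAt.comp_hasDerivAt t hγ).congr_deriv ?_
  rw [← inner_gradient_left, hgrad, adjoint_inner_left, hdyn,
    inner_portHamiltonian_eq hJ hS hSR]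

end ContinuousLinearMap

theorem strictMonoOn_const_mul_sq {c : ℝ} (hc : c ≠ 0) :
    StrictMonoOn (fun σ : ℝ => c ^ 2 * σ ^ 2) (Ici 0) := fun _ ha _ _ hab =>
  mul_lt_mul_of_pos_left (pow_lt_pow_left₀ hab ha two_ne_zero) (by positivity)

theorem statement11_general
    (n m : ℕ)
    (E J R Rhalf : EuclideanSpace ℝ (Fin n) → (EuclideanSpace ℝ (Fin n) →L[ℝ] EuclideanSpace ℝ (Fin n)))
    (η : EuclideanSpace ℝ (Fin n) → EuclideanSpace ℝ (Fin n))
    (B : EuclideanSpace ℝ (Fin n) → (EuclideanSpace ℝ (Fin m) →L[ℝ] EuclideanSpace ℝ (Fin n)))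
    (hJskew : ∀ x, ContinuousLinearMap.adjoint (J x) = -(J x))
    (hRhalfsym : ∀ x, ContinuousLinearMap.adjoint (Rhalf x) = Rhalf x)
    (hRhalfsq : ∀ x, (Rhalf x).comp (Rhalf x) = R x)
    (H : EuclideanSpace ℝ (Fin n) → ℝ) (hH : ContDiff ℝ 1 H)
    (hgrad : ∀ x, gradient H x = ContinuousLinearMap.adjoint (E x) (η x))
    (f : EuclideanSpace ℝ (Fin n) → EuclideanSpace ℝ (Fin n))
    (hfdef : ∀ z, f z = Rhalf z (η z))
    (M : Set (EuclideanSpace ℝ (Fin n)))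
    (V : Set (EuclideanSpace ℝ (Fin n)))
    (c : ℝ) (hc : 0 < c)
    (hdist : ∀ z ∈ V, c * infDist z M ≤ ‖f z‖)
    (T : ℝ) (hT : 0 < T)
    (u : ℝ → EuclideanSpace ℝ (Fin m))
    (x x' : ℝ → EuclideanSpace ℝ (Fin n))
    (hsol : ∀ t ∈ Icc 0 T, HasDerivAt x (x' t) t ∧
      E (x t) (x' t) = (J (x t) - R (x t)) (η (x t)) + B (x t) (u t))
    (hstay : ∀ t ∈ Icc 0 T, x t ∈ V)
    (hyu : IntervalIntegrable
      (fun t => ⟪ContinuousLinearMap.adjoint (B (x t)) (η (x t)), u t⟫) volume 0 T) :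
    H (x T) - H (x 0)
      ≤ (∫ t in (0:ℝ)..T,
          (⟪ContinuousLinearMap.adjoint (B (x t)) (η (x t)), u t⟫
            - c ^ 2 * infDist (x t) M ^ 2)) ∧
    (c ^ 2 * (0:ℝ) ^ 2 = 0 ∧ ContinuousOn (fun σ : ℝ => c ^ 2 * σ ^ 2) (Ici 0) ∧
      StrictMonoOn (fun σ : ℝ => c ^ 2 * σ ^ 2) (Ici 0)) := by
  have hderiv : ∀ t ∈ Icc 0 T, HasDerivAt (fun t => H (x t))
      (⟪ContinuousLinearMap.adjoint (B (x t)) (η (x t)), u t⟫ - ‖f (x t)‖ ^ 2) t := fun t ht => by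
    rw [hfdef]
    exact ContinuousLinearMap.hasDerivAt_comp_of_portHamiltonian
      ((hH.differentiable one_ne_zero) _) (hgrad _) (hsol t ht).1 (hsol t ht).2
      (hJskew _) (hRhalfsym _) (hRhalfsq _)
  have hdist_sq : ∀ t ∈ Icc 0 T, c ^ 2 * infDist (x t) M ^ 2 ≤ ‖f (x t)‖ ^ 2 := fun t ht => by
    rw [← mul_pow]
    exact pow_le_pow_left₀ (mul_nonneg hc.le infDist_nonneg) (hdist _ (hstay t ht)) 2
  have hx : ContinuousOn x (Icc 0 T) := fun t ht => (hsol t ht).1.continuousAt.continuousWithinAt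
  have hdist_int : IntervalIntegrable (fun t => c ^ 2 * infDist (x t) M ^ 2) volume 0 T :=
    (continuousOn_const.mul (((continuous_infDist_pt M).comp_continuousOn hx).pow 2)
      |>.intervalIntegrable_of_Icc hT.le)
  refine ⟨?_, by ring, by fun_prop, strictMonoOn_const_mul_sq hc.ne'⟩
  refine intervalIntegral.sub_le_integral_of_hasDeriv_right_of_le hT.le
    (fun t ht => (hderiv t ht).continuousAt.continuousWithinAt)
    (fun t ht => (hderiv t (Ioo_subset_Icc_self ht)).hasDerivWithinAt)
    ((intervalIntegrable_iff_integrableOn_Icc_of_le hT.le).mp (hyu.sub hdist_int))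
    (fun t ht => ?_)
  linarith [hdist_sq t (Ioo_subset_Icc_self ht)]

/-- (The port-Hamiltonian optimal control problem is manifold
dissipative.)  With the port-Hamiltonian structure of Statement 10, a nonnegative
Hamiltonian `H`, `f(x) := R(x)^{1/2}η(x)` of class `C²`, `M = f⁻¹(0)` nonempty, constant
kernel dimension `0 < s < n` of `Df` on a neighborhood `G` of `M`, smallest nonzero
singular value of `Df` bounded below by `c̃ > 0` on `G`, and `V ⊇ M` open with
`c·dist(x,M) ≤ ‖f(x)‖` on `V`: every solution on `[0,T]` whose trajectory stays in `V`
satisfies the dissipation inequality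
`H(x(T)) − H(x(0)) ≤ ∫₀ᵀ (yᵀu − α(dist(x,M))) dt` with `α(σ) = c²σ²`, and `α` is of
class `𝒦` (vanishing at `0`, continuous and strictly increasing on `[0,∞)`). -/
theorem statement11
    (n m s : ℕ) (hs0 : 0 < s) (hsn : s < n)
    (E J R Rhalf : EuclideanSpace ℝ (Fin n) → (EuclideanSpace ℝ (Fin n) →L[ℝ] EuclideanSpace ℝ (Fin n)))
    (η : EuclideanSpace ℝ (Fin n) → EuclideanSpace ℝ (Fin n))
    (B : EuclideanSpace ℝ (Fin n) → (EuclideanSpace ℝ (Fin m) →L[ℝ] EuclideanSpace ℝ (Fin n)))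
    (hEc : Continuous E) (hJc : Continuous J) (hRc : Continuous R)
    (hηc : Continuous η) (hBc : Continuous B)
    (hJskew : ∀ x, ContinuousLinearMap.adjoint (J x) = -(J x))
    (hRsym : ∀ x, ContinuousLinearMap.adjoint (R x) = R x)
    (hRpsd : ∀ x v, 0 ≤ ⟪v, R x v⟫)
    (hRhalfsym : ∀ x, ContinuousLinearMap.adjoint (Rhalf x) = Rhalf x)
    (hRhalfpsd : ∀ x v, 0 ≤ ⟪v, Rhalf x v⟫)
    (hRhalfsq : ∀ x, (Rhalf x).comp (Rhalf x) = R x)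
    (H : EuclideanSpace ℝ (Fin n) → ℝ) (hH : ContDiff ℝ 1 H) (hHpos : ∀ z, 0 ≤ H z)
    (hgrad : ∀ x, gradient H x = ContinuousLinearMap.adjoint (E x) (η x))
    (f : EuclideanSpace ℝ (Fin n) → EuclideanSpace ℝ (Fin n))
    (hfdef : ∀ z, f z = Rhalf z (η z)) (hf : ContDiff ℝ 2 f)
    (M : Set (EuclideanSpace ℝ (Fin n))) (hMdef : M = {z | f z = 0}) (hMne : M.Nonempty)
    (G : Set (EuclideanSpace ℝ (Fin n))) (hG : IsOpen G) (hMG : M ⊆ G)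
    (hker : ∀ z ∈ G, Module.finrank ℝ (LinearMap.ker (fderiv ℝ f z : EuclideanSpace ℝ (Fin n) →ₗ[ℝ] EuclideanSpace ℝ (Fin n))) = s)
    (ctilde : ℝ) (hctilde : 0 < ctilde)
    (hsv : ∀ z ∈ G, ctilde ≤ smallestPosSV (fderiv ℝ f z))
    (V : Set (EuclideanSpace ℝ (Fin n))) (hV : IsOpen V) (hMV : M ⊆ V)
    (c : ℝ) (hc : 0 < c)
    (hdist : ∀ z ∈ V, c * infDist z M ≤ ‖f z‖)
    (T : ℝ) (hT : 0 < T)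
    (u : ℝ → EuclideanSpace ℝ (Fin m))
    (x x' : ℝ → EuclideanSpace ℝ (Fin n))
    (hsol : ∀ t ∈ Icc 0 T, HasDerivAt x (x' t) t ∧
      E (x t) (x' t) = (J (x t) - R (x t)) (η (x t)) + B (x t) (u t))
    (hstay : ∀ t ∈ Icc 0 T, x t ∈ V)
    (hyu : IntervalIntegrable
      (fun t => ⟪ContinuousLinearMap.adjoint (B (x t)) (η (x t)), u t⟫) volume 0 T) :
    H (x T) - H (x 0)
      ≤ (∫ t in (0:ℝ)..T,
          (⟪ContinuousLinearMap.adjoint (B (x t)) (η (x t)), u t⟫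
            - c ^ 2 * infDist (x t) M ^ 2)) ∧
    (c ^ 2 * (0:ℝ) ^ 2 = 0 ∧ ContinuousOn (fun σ : ℝ => c ^ 2 * σ ^ 2) (Ici 0) ∧
      StrictMonoOn (fun σ : ℝ => c ^ 2 * σ ^ 2) (Ici 0)) :=
  statement11_general n m E J R Rhalf η B hJskew hRhalfsym hRhalfsq H hH hgrad f hfdef M V c hc
    hdist T hT u x x' hsol hstay hyu
end
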